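/- arXiv:2506.13269 — 3 statements merged into one kernel-verified Lean document; each statement's English description precedes it below -/
import Mathlib

section
/- Let G and H be regular graphs with degrees d_G and d_H. Let x1, x2 ∈ V(G) with N_G[x1] = N_G[x2], and let y1y2 ∈ E(H). In the strong product G ⊠ H, the minimum total transport cost over all bijections φ between R_{(x1,y1)}((x1,y1),(x2,y2)) and R_{(x2,y2)}((x1,y1),(x2,y2)) of ∑_z d(z, φ(z)) equals (d_G + 1) times the corresponding minimum over bijections between R_{y1}(y1,y2) and R_{y2}(y1,y2) in H. -/
open SimpleGraph Filter Set

noncomputable section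
attribute [local instance] Classical.propDecidable

variable {V α β : Type*}

/-- The strong product of two simple graphs. -/
def StrongProd (G : SimpleGraph α) (H : SimpleGraph β) : SimpleGraph (α × β) where
  Adj p q := p ≠ q ∧ (p.1 = q.1 ∨ G.Adj p.1 q.1) ∧ (p.2 = q.2 ∨ H.Adj p.2 q.2)
  symm := ⟨by
    rintro p q ⟨h1, h2, h3⟩
    exact ⟨h1.symm, h2.imp Eq.symm Adj.symm, h3.imp Eq.symm Adj.symm⟩⟩
  loopless := ⟨fun p h => h.1 rfl⟩

/-- Closed neighborhood N[x]. -/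
def closedNbr (G : SimpleGraph V) (x : V) : Set V := insert x (G.neighborSet x)

/-- The set R_x(x,y) = N(x) \ ((N(x) ∩ N(y)) ∪ {y}). -/
def Rside (G : SimpleGraph V) (x y : V) : Set V :=
  G.neighborSet x \ ((G.neighborSet x ∩ G.neighborSet y) ∪ {y})

/-- Total transport cost of an assignment (bijection) between R_x(x,y) and R_y(x,y). -/
def cost (G : SimpleGraph V) (x y : V) (φ : Rside G x y ≃ Rside G y x) : ℝ :=
  ∑' z : Rside G x y, (G.dist z.1 (φ z).1 : ℝ)

/-- The optimal (minimal) total transport cost over all assignments. -/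
def OPTc (G : SimpleGraph V) (x y : V) : ℝ :=
  sInf { c | ∃ φ : Rside G x y ≃ Rside G y x, c = cost G x y φ }

/-- An assignment is optimal if it attains the minimal total cost. -/
def IsOptimal (G : SimpleGraph V) (x y : V) (φ : Rside G x y ≃ Rside G y x) : Prop :=
  cost G x y φ = OPTc G x y

/-- The largest displacement appearing in an optimal assignment, maximized over
optimal assignments. -/
def MAXc (G : SimpleGraph V) (x y : V) : ℝ :=
  sSup { m | ∃ φ : Rside G x y ≃ Rside G y x, IsOptimal G x y φ ∧
    m = ⨆ z : Rside G x y, (G.dist z.1 (φ z).1 : ℝ) }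

/-- The measure μ_x^α. -/
def muMeas (G : SimpleGraph V) [G.LocallyFinite] (α : ℝ) (x : V) : V → ℝ :=
  fun z => if z = x then α else if G.Adj x z then (1 - α) / (G.degree x) else 0

/-- Wasserstein (optimal transport) distance between two measures with respect to
the graph distance. -/
def Wass (G : SimpleGraph V) (μ ν : V → ℝ) : ℝ :=
  sInf { c | ∃ π : V → V → ℝ, (∀ u v, 0 ≤ π u v) ∧
    (∀ u, ∑' v, π u v = μ u) ∧ (∀ v, ∑' u, π u v = ν v) ∧
    c = ∑' u, ∑' v, (G.dist u v : ℝ) * π u v }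

/-- The α-Ricci (Ollivier) curvature of an edge xy. -/
def kap (G : SimpleGraph V) [G.LocallyFinite] (α : ℝ) (x y : V) : ℝ :=
  1 - Wass G (muMeas G α x) (muMeas G α y)

/-- Ollivier Ricci curvature with idleness 0. -/
def kap0 (G : SimpleGraph V) [G.LocallyFinite] (x y : V) : ℝ := kap G 0 x y

/-- `IsLLY G x y k` says that the Lin–Lu–Yau curvature of the edge xy exists and
equals k, i.e. κ_α(x,y)/(1-α) → k as α → 1⁻. -/
def IsLLY (G : SimpleGraph V) [G.LocallyFinite] (x y : V) (k : ℝ) : Prop :=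
  Tendsto (fun α => kap G α x y / (1 - α)) (nhdsWithin 1 (Set.Iio 1)) (nhds k)

/-! ### Auxiliary lemmas -/

section Aux

lemma strongProd_adj {G : SimpleGraph α} {H : SimpleGraph β} {p q : α × β} :
    (StrongProd G H).Adj p q ↔
      p ≠ q ∧ (p.1 = q.1 ∨ G.Adj p.1 q.1) ∧ (p.2 = q.2 ∨ H.Adj p.2 q.2) :=
  Iff.rfl

variable {G : SimpleGraph α} {H : SimpleGraph β}

lemma walk_proj {p q : α × β} (w : (StrongProd G H).Walk p q) :
    ∃ w' : H.Walk p.2 q.2, w'.length ≤ w.length := by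
  induction w with
  | nil => exact ⟨SimpleGraph.Walk.nil, le_rfl⟩
  | @cons p r q h w ih =>
    obtain ⟨w', hw'⟩ := ih
    rcases h.2.2 with he | ha
    · exact ⟨w'.copy he.symm rfl, by simpa using hw'.trans (Nat.le_succ _)⟩
    · exact ⟨SimpleGraph.Walk.cons ha w', by simpa using Nat.succ_le_succ hw'⟩

lemma walk_liftH (a : α) {z z' : β} (w : H.Walk z z') :
    ∃ w' : (StrongProd G H).Walk (a, z) (a, z'), w'.length = w.length := by
  induction w with
  | nil => exact ⟨SimpleGraph.Walk.nil, rfl⟩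
  | @cons z r z' h w ih =>
    obtain ⟨w', hw'⟩ := ih
    have hadj : (StrongProd G H).Adj (a, z) (a, r) :=
      ⟨by simp [Prod.ext_iff, h.ne], Or.inl rfl, Or.inr h⟩
    exact ⟨SimpleGraph.Walk.cons hadj w', by simp [hw']⟩

lemma walk_liftG (z : β) {a b : α} (w : G.Walk a b) :
    ∃ w' : (StrongProd G H).Walk (a, z) (b, z), w'.length = w.length := by
  induction w with
  | nil => exact ⟨SimpleGraph.Walk.nil, rfl⟩
  | @cons a r b h w ih =>
    obtain ⟨w', hw'⟩ := ih
    have hadj : (StrongProd G H).Adj (a, z) (r, z) :=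
      ⟨by simp [Prod.ext_iff, h.ne], Or.inr h, Or.inl rfl⟩
    exact ⟨SimpleGraph.Walk.cons hadj w', by simp [hw']⟩

lemma reach_proj {p q : α × β} (h : (StrongProd G H).Reachable p q) :
    H.Reachable p.2 q.2 := by
  obtain ⟨w⟩ := h
  obtain ⟨w', -⟩ := walk_proj w
  exact ⟨w'⟩

lemma dist_P_le (a : α) (z w : β) :
    (StrongProd G H).dist (a, z) (a, w) ≤ H.dist z w := by
  by_cases h : H.Reachable z w
  · obtain ⟨p, hp⟩ := h.exists_walk_length_eq_dist
    obtain ⟨p', hp'⟩ := walk_liftH (G := G) a p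
    calc (StrongProd G H).dist (a, z) (a, w) ≤ p'.length := SimpleGraph.dist_le p'
      _ = H.dist z w := by rw [hp', hp]
  · have h' : ¬ (StrongProd G H).Reachable (a, z) (a, w) := fun hr => h (reach_proj hr)
    rw [SimpleGraph.dist_eq_zero_of_not_reachable h',
      SimpleGraph.dist_eq_zero_of_not_reachable h]

lemma dist_H_le {a b : α} (z w : β) (hab : G.Reachable a b) :
    H.dist z w ≤ (StrongProd G H).dist (a, z) (b, w) := by
  by_cases h : H.Reachable z w
  · have hreach : (StrongProd G H).Reachable (a, z) (b, w) := by
      obtain ⟨wg⟩ := hab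
      obtain ⟨wg', -⟩ := walk_liftG (H := H) z wg
      obtain ⟨wh⟩ := h
      obtain ⟨wh', -⟩ := walk_liftH (G := G) b wh
      exact ⟨wg'.append wh'⟩
    obtain ⟨p, hp⟩ := hreach.exists_walk_length_eq_dist
    obtain ⟨p', hp'⟩ := walk_proj p
    calc H.dist z w ≤ p'.length := SimpleGraph.dist_le p'
      _ ≤ p.length := hp'
      _ = _ := hp
  · rw [SimpleGraph.dist_eq_zero_of_not_reachable h]
    exact Nat.zero_le _

lemma mem_Rside {G : SimpleGraph V} {x y z : V} :
    z ∈ Rside G x y ↔ G.Adj x z ∧ ¬ G.Adj y z ∧ z ≠ y := by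
  simp only [Rside, Set.mem_diff, Set.mem_union, Set.mem_inter_iff, Set.mem_singleton_iff,
    SimpleGraph.mem_neighborSet, not_or]
  tauto

lemma Rside_prod {x1 x2 : α} {y1 y2 : β}
    (hN : closedNbr G x1 = closedNbr G x2) (hy : H.Adj y1 y2) :
    Rside (StrongProd G H) (x1, y1) (x2, y2) = (closedNbr G x1) ×ˢ (Rside H y1 y2) := by
  have hmem : ∀ b, (b = x1 ∨ G.Adj x1 b) ↔ (b = x2 ∨ G.Adj x2 b) := by
    intro b
    have h := Set.ext_iff.1 hN b
    simpa [closedNbr, SimpleGraph.mem_neighborSet] using h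
  ext ⟨a, z⟩
  rw [mem_Rside, Set.mem_prod, mem_Rside]
  simp only [strongProd_adj, closedNbr, Set.mem_insert_iff, SimpleGraph.mem_neighborSet]
  constructor
  · rintro ⟨⟨hne1, ha1, hz1⟩, hnadj2, hne2⟩
    have ha : a = x1 ∨ G.Adj x1 a := by
      rcases ha1 with h | h
      · exact Or.inl h.symm
      · exact Or.inr h
    have hz2 : ¬ (z = y2 ∨ H.Adj y2 z) := by
      intro hc
      apply hnadj2
      refine ⟨fun h => hne2 h.symm, ?_, ?_⟩
      · rcases (hmem a).1 ha with h | h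
        · exact Or.inl h.symm
        · exact Or.inr h
      · rcases hc with h | h
        · exact Or.inl h.symm
        · exact Or.inr h
    push_neg at hz2
    have hzadj : H.Adj y1 z := by
      rcases hz1 with h | h
      · exact absurd (h ▸ hy.symm : H.Adj y2 z) hz2.2
      · exact h
    exact ⟨ha, hzadj, hz2.2, hz2.1⟩
  · rintro ⟨ha, hzadj, hznadj, hzne⟩
    have ha1 : x1 = a ∨ G.Adj x1 a := by
      rcases ha with h | h
      · exact Or.inl h.symm
      · exact Or.inr h
    refine ⟨⟨?_, ha1, Or.inr hzadj⟩, ?_, ?_⟩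
    · intro h
      exact hzadj.ne (congrArg Prod.snd h)
    · rintro ⟨-, -, hz⟩
      rcases hz with h | h
      · exact hzne h.symm
      · exact hznadj h
    · intro h
      exact hzne (congrArg Prod.snd h)

lemma ncard_neighborSet {G : SimpleGraph V} [Fintype V] (x : V) :
    (G.neighborSet x).ncard = G.degree x := by
  rw [← Nat.card_coe_set_eq, Nat.card_eq_fintype_card]
  exact SimpleGraph.card_neighborSet_eq_degree G x

lemma ncard_Rside {H : SimpleGraph β} [Fintype β] {y1 y2 : β} (hy : H.Adj y1 y2) :
    (Rside H y1 y2).ncard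
      = H.degree y1 - ((H.neighborSet y1 ∩ H.neighborSet y2).ncard + 1) := by
  have hsub : (H.neighborSet y1 ∩ H.neighborSet y2) ∪ {y2} ⊆ H.neighborSet y1 := by
    rintro b (hb | hb)
    · exact hb.1
    · rw [Set.mem_singleton_iff] at hb
      rw [SimpleGraph.mem_neighborSet, hb]
      exact hy
  rw [Rside, Set.ncard_diff hsub, ncard_neighborSet]
  congr 1
  rw [Set.union_singleton, Set.ncard_insert_of_notMem]
  intro hc
  exact H.irrefl hc.2

lemma core_assignment {A S T : Type*} [Fintype A] [Fintype S] [Fintype T] [Nonempty A]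
    (c : S → T → ℝ) (Φ : A × S ≃ A × T) :
    (Fintype.card A : ℝ) * sInf {x | ∃ ψ : S ≃ T, x = ∑ z, c z (ψ z)}
      ≤ ∑ u : A × S, c u.2 (Φ u).2 := by
  classical
  set OPT := sInf {x | ∃ ψ : S ≃ T, x = ∑ z, c z (ψ z)} with hOPT
  have hbdd : BddBelow {x | ∃ ψ : S ≃ T, x = ∑ z, c z (ψ z)} := by
    have : {x | ∃ ψ : S ≃ T, x = ∑ z, c z (ψ z)}
        = Set.range (fun ψ : S ≃ T => ∑ z, c z (ψ z)) := by
      ext x; simp [eq_comm, Set.range]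
    rw [this]
    exact (Set.finite_range _).bddBelow
  have hOPT_le : ∀ ψ : S ≃ T, OPT ≤ ∑ z, c z (ψ z) := fun ψ => csInf_le hbdd ⟨ψ, rfl⟩
  have hcard : Fintype.card S = Fintype.card T := by
    have h := Fintype.card_congr Φ
    simp only [Fintype.card_prod] at h
    exact Nat.eq_of_mul_eq_mul_left Fintype.card_pos h
  let e0 : S ≃ T := Fintype.equivOfCardEq hcard
  set n := Fintype.card A with hn
  set M : Matrix S S ℝ := fun z z' => ∑ a : A, if (Φ (a, z)).2 = e0 z' then (1:ℝ) else 0 with hM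
  have hMentry : ∀ z z' a, (if (Φ (a, z)).2 = e0 z' then (1:ℝ) else 0)
      = if z' = e0.symm (Φ (a, z)).2 then (1:ℝ) else 0 := by
    intro z z' a
    have hiff : ((Φ (a, z)).2 = e0 z') ↔ (z' = e0.symm (Φ (a, z)).2) := by
      constructor
      · intro h; rw [h, Equiv.symm_apply_apply]
      · intro h; rw [h, Equiv.apply_symm_apply]
    simp only [hiff]
  have hrow : ∀ z, ∑ z', M z z' = (n : ℝ) := by
    intro z
    rw [Finset.sum_comm]
    have : ∀ a : A, ∑ z', (if (Φ (a, z)).2 = e0 z' then (1:ℝ) else 0) = 1 := by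
      intro a
      rw [Finset.sum_congr rfl fun z' _ => hMentry z z' a]
      simp
    rw [Finset.sum_congr rfl fun a _ => this a]
    simp [hn]
  have hcol : ∀ z', ∑ z, M z z' = (n : ℝ) := by
    intro z'
    have h1 : ∑ z, M z z' = ∑ u : A × S, (if (Φ u).2 = e0 z' then (1:ℝ) else 0) := by
      rw [Fintype.sum_prod_type]
      exact Finset.sum_comm
    have h2 : ∑ u : A × S, (if (Φ u).2 = e0 z' then (1:ℝ) else 0)
        = ∑ v : A × T, (if v.2 = e0 z' then (1:ℝ) else 0) :=
      Equiv.sum_comp Φ (fun v => if v.2 = e0 z' then (1:ℝ) else 0)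
    rw [h1, h2, Fintype.sum_prod_type]
    simp [hn]
  have hMnonneg : ∀ z z', 0 ≤ M z z' := by
    intro z z'
    exact Finset.sum_nonneg fun a _ => by positivity
  obtain ⟨M', hM'ds, hMeq⟩ := (exists_mem_doublyStochastic_eq_smul_iff
    (M := M) (s := (n : ℝ)) (by positivity)).2 ⟨hMnonneg, hrow, hcol⟩
  obtain ⟨w, hw0, hw1, hwM⟩ := exists_eq_sum_perm_of_mem_doublyStochastic hM'ds
  have hcost : ∑ u : A × S, c u.2 (Φ u).2 = ∑ z, ∑ z', M z z' * c z (e0 z') := by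
    have inner : ∀ z a, ∑ z', (if (Φ (a, z)).2 = e0 z' then (1:ℝ) else 0) * c z (e0 z')
        = c z (Φ (a, z)).2 := by
      intro z a
      have : ∀ z', (if (Φ (a, z)).2 = e0 z' then (1:ℝ) else 0) * c z (e0 z')
          = if z' = e0.symm (Φ (a, z)).2 then c z (e0 z') else 0 := by
        intro z'
        rw [hMentry]
        by_cases h : z' = e0.symm (Φ (a, z)).2 <;> simp [h]
      rw [Finset.sum_congr rfl fun z' _ => this z']
      rw [Finset.sum_ite_eq' Finset.univ (e0.symm (Φ (a, z)).2) (fun z' => c z (e0 z'))]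
      simp
    calc ∑ u : A × S, c u.2 (Φ u).2 = ∑ a, ∑ z, c z (Φ (a, z)).2 := by
          rw [Fintype.sum_prod_type]
      _ = ∑ z, ∑ a, c z (Φ (a, z)).2 := Finset.sum_comm
      _ = ∑ z, ∑ a : A, ∑ z', (if (Φ (a, z)).2 = e0 z' then (1:ℝ) else 0) * c z (e0 z') := by
          exact Finset.sum_congr rfl fun z _ => Finset.sum_congr rfl fun a _ => (inner z a).symm
      _ = ∑ z, ∑ z', (∑ a : A, if (Φ (a, z)).2 = e0 z' then (1:ℝ) else 0) * c z (e0 z') := by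
          refine Finset.sum_congr rfl fun z _ => ?_
          rw [Finset.sum_comm]
          exact Finset.sum_congr rfl fun z' _ => (Finset.sum_mul _ _ _).symm
      _ = ∑ z, ∑ z', M z z' * c z (e0 z') := rfl
  have hperm : ∀ (σ : Equiv.Perm S) (i j : S),
      (σ.permMatrix ℝ) i j = if σ i = j then (1:ℝ) else 0 := by
    intro σ i j
    simp [Equiv.Perm.permMatrix, PEquiv.toMatrix_apply, Equiv.toPEquiv_apply, Option.mem_def,
      eq_comm]
  have hdecomp : ∑ z, ∑ z', M z z' * c z (e0 z')
      = (n : ℝ) * ∑ σ : Equiv.Perm S, w σ * ∑ z, c z (e0 (σ z)) := by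
    have hMzz : ∀ z z', M z z'
        = (n : ℝ) * ∑ σ : Equiv.Perm S, w σ * (if σ z = z' then (1:ℝ) else 0) := by
      intro z z'
      rw [hMeq, ← hwM]
      simp only [Matrix.smul_apply, Matrix.sum_apply, smul_eq_mul]
      congr 1
      exact Finset.sum_congr rfl fun σ _ => by rw [hperm]
    calc ∑ z, ∑ z', M z z' * c z (e0 z')
        = (n : ℝ) * ∑ z, ∑ z', (∑ σ : Equiv.Perm S, w σ * (if σ z = z' then (1:ℝ) else 0))
            * c z (e0 z') := by
          rw [Finset.mul_sum]
          refine Finset.sum_congr rfl fun z _ => ?_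
          rw [Finset.mul_sum]
          refine Finset.sum_congr rfl fun z' _ => ?_
          rw [hMzz, mul_assoc]
      _ = (n : ℝ) * ∑ z, ∑ z', ∑ σ : Equiv.Perm S,
            w σ * ((if σ z = z' then (1:ℝ) else 0) * c z (e0 z')) := by
          congr 1
          refine Finset.sum_congr rfl fun z _ => Finset.sum_congr rfl fun z' _ => ?_
          rw [Finset.sum_mul]
          exact Finset.sum_congr rfl fun σ _ => by ring
      _ = (n : ℝ) * ∑ z, ∑ σ : Equiv.Perm S, ∑ z',
            w σ * ((if σ z = z' then (1:ℝ) else 0) * c z (e0 z')) := by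
          congr 1
          exact Finset.sum_congr rfl fun z _ => Finset.sum_comm
      _ = (n : ℝ) * ∑ σ : Equiv.Perm S, ∑ z, ∑ z',
            w σ * ((if σ z = z' then (1:ℝ) else 0) * c z (e0 z')) := by
          congr 1
          exact Finset.sum_comm
      _ = (n : ℝ) * ∑ σ : Equiv.Perm S, w σ * ∑ z, ∑ z',
            (if σ z = z' then (1:ℝ) else 0) * c z (e0 z') := by
          congr 1
          refine Finset.sum_congr rfl fun σ _ => ?_
          rw [Finset.mul_sum]
          exact Finset.sum_congr rfl fun z _ => by rw [Finset.mul_sum]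
      _ = (n : ℝ) * ∑ σ : Equiv.Perm S, w σ * ∑ z, c z (e0 (σ z)) := by
          congr 1
          refine Finset.sum_congr rfl fun σ _ => ?_
          congr 1
          refine Finset.sum_congr rfl fun z _ => ?_
          have : ∀ z', (if σ z = z' then (1:ℝ) else 0) * c z (e0 z')
              = if z' = σ z then c z (e0 z') else 0 := by
            intro z'
            by_cases h : z' = σ z <;> simp [h, eq_comm]
          rw [Finset.sum_congr rfl fun z' _ => this z', Finset.sum_ite_eq' Finset.univ (σ z)]
          simp
  rw [hcost, hdecomp]
  have hfinal : OPT ≤ ∑ σ : Equiv.Perm S, w σ * ∑ z, c z (e0 (σ z)) := by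
    calc OPT = ∑ σ : Equiv.Perm S, w σ * OPT := by rw [← Finset.sum_mul, hw1, one_mul]
      _ ≤ ∑ σ : Equiv.Perm S, w σ * ∑ z, c z (e0 (σ z)) := by
          refine Finset.sum_le_sum fun σ _ => mul_le_mul_of_nonneg_left ?_ (hw0 σ)
          exact hOPT_le (σ.trans e0)
  exact mul_le_mul_of_nonneg_left hfinal (by positivity)

end Aux

theorem opt_strongProd [Fintype α] [Fintype β] (G : SimpleGraph α) (H : SimpleGraph β)
    (dG dH : ℕ) (hG : G.IsRegularOfDegree dG) (hH : H.IsRegularOfDegree dH)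
    (x1 x2 : α) (hN : closedNbr G x1 = closedNbr G x2) (y1 y2 : β) (hy : H.Adj y1 y2) :
    OPTc (StrongProd G H) (x1, y1) (x2, y2) = ((dG : ℝ) + 1) * OPTc H y1 y2 := by
  classical
  have hEq1 : Rside (StrongProd G H) (x1, y1) (x2, y2)
      = (closedNbr G x1) ×ˢ (Rside H y1 y2) := Rside_prod hN hy
  have hEq2 : Rside (StrongProd G H) (x2, y2) (x1, y1)
      = (closedNbr G x1) ×ˢ (Rside H y2 y1) := by
    rw [hN]
    exact Rside_prod hN.symm hy.symm
  set P := StrongProd G H with hP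
  set A := closedNbr G x1 with hA
  set S := Rside H y1 y2 with hS
  set T := Rside H y2 y1 with hT
  have hx1A : x1 ∈ A := Set.mem_insert _ _
  haveI : Nonempty ↥A := ⟨⟨x1, hx1A⟩⟩
  -- cardinality of A
  have hcardA : (Fintype.card ↥A : ℝ) = (dG : ℝ) + 1 := by
    have h1 : Fintype.card ↥A = dG + 1 := by
      rw [← Nat.card_eq_fintype_card, Nat.card_coe_set_eq, hA, closedNbr,
        Set.ncard_insert_of_notMem (by simp) (Set.toFinite _), ncard_neighborSet, hG x1]
    rw [h1]
    push_cast
    ring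
  -- cardinalities of S and T agree
  have hcardST : Fintype.card ↥S = Fintype.card ↥T := by
    rw [← Nat.card_eq_fintype_card, Nat.card_coe_set_eq,
      ← Nat.card_eq_fintype_card, Nat.card_coe_set_eq, hS, hT,
      ncard_Rside hy, ncard_Rside hy.symm, hH y1, hH y2, Set.inter_comm]
  -- reachability within A
  have hreachA : ∀ u v : ↥A, G.Reachable u.1 v.1 := by
    have hstep : ∀ u : ↥A, G.Reachable u.1 x1 := by
      rintro ⟨u, hu⟩
      rcases Set.mem_insert_iff.1 hu with rfl | h
      · exact SimpleGraph.Reachable.refl _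
      · exact (SimpleGraph.Adj.reachable h).symm
    intro u v
    exact (hstep u).trans (hstep v).symm
  -- the equivalences identifying the product structure
  let E1 : ↥A × ↥S ≃ ↥(Rside P (x1, y1) (x2, y2)) :=
    (Equiv.Set.prod A S).symm.trans (Equiv.setCongr hEq1.symm)
  let E2 : ↥A × ↥T ≃ ↥(Rside P (x2, y2) (x1, y1)) :=
    (Equiv.Set.prod A T).symm.trans (Equiv.setCongr hEq2.symm)
  have hE1val : ∀ v : ↥A × ↥S, ((E1 v : α × β)) = (v.1.1, v.2.1) := fun _ => rfl
  have hE2val : ∀ v : ↥A × ↥T, ((E2 v : α × β)) = (v.1.1, v.2.1) := fun _ => rfl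
  set c : ↥S → ↥T → ℝ := fun z w => (H.dist z.1 w.1 : ℝ) with hc
  -- identify OPTc H with the abstract infimum
  have hsetH : { x | ∃ φ : Rside H y1 y2 ≃ Rside H y2 y1, x = cost H y1 y2 φ }
      = {x | ∃ ψ : ↥S ≃ ↥T, x = ∑ z, c z (ψ z)} := by
    ext x
    refine exists_congr fun ψ => ?_
    rw [cost, tsum_fintype]
  have hOPTH : OPTc H y1 y2 = sInf {x | ∃ ψ : ↥S ≃ ↥T, x = ∑ z, c z (ψ z)} := by
    rw [OPTc, hsetH]
  -- the H-side cost set is finite and nonempty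
  have hCHfin : {x | ∃ ψ : ↥S ≃ ↥T, x = ∑ z, c z (ψ z)}.Finite := by
    have : {x | ∃ ψ : ↥S ≃ ↥T, x = ∑ z, c z (ψ z)}
        = Set.range (fun ψ : ↥S ≃ ↥T => ∑ z, c z (ψ z)) := by
      ext x; simp [eq_comm, Set.range]
    rw [this]
    exact Set.finite_range _
  have hCHne : {x | ∃ ψ : ↥S ≃ ↥T, x = ∑ z, c z (ψ z)}.Nonempty :=
    ⟨_, Fintype.equivOfCardEq hcardST, rfl⟩
  -- lower bound for each product assignment
  have hlow : ∀ b ∈ { x | ∃ φ : Rside P (x1, y1) (x2, y2) ≃ Rside P (x2, y2) (x1, y1),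
      x = cost P (x1, y1) (x2, y2) φ }, ((dG : ℝ) + 1) * OPTc H y1 y2 ≤ b := by
    rintro b ⟨φ, rfl⟩
    rw [cost, tsum_fintype]
    set Φ : ↥A × ↥S ≃ ↥A × ↥T := E1.trans (φ.trans E2.symm) with hΦ
    have hφE : ∀ v : ↥A × ↥S, φ (E1 v) = E2 (Φ v) := by
      intro v
      simp [hΦ, E2.apply_symm_apply]
    have hsum : ∑ u : ↥(Rside P (x1, y1) (x2, y2)), ((P.dist u.1 (φ u).1 : ℕ) : ℝ)
        = ∑ v : ↥A × ↥S, ((P.dist (v.1.1, v.2.1) ((Φ v).1.1, (Φ v).2.1) : ℕ) : ℝ) := by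
      rw [← Equiv.sum_comp E1 (fun u => ((P.dist u.1 (φ u).1 : ℕ) : ℝ))]
      refine Finset.sum_congr rfl fun v _ => ?_
      rw [hφE v]
      congr 1
    have hterm : ∀ v : ↥A × ↥S,
        c v.2 (Φ v).2 ≤ ((P.dist (v.1.1, v.2.1) ((Φ v).1.1, (Φ v).2.1) : ℕ) : ℝ) := by
      intro v
      have h := dist_H_le (G := G) (H := H) v.2.1 ((Φ v).2).1 (hreachA v.1 (Φ v).1)
      show ((H.dist v.2.1 (Φ v).2.1 : ℕ) : ℝ) ≤ _
      rw [hP]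
      exact_mod_cast h
    calc ((dG : ℝ) + 1) * OPTc H y1 y2
        = (Fintype.card ↥A : ℝ) * sInf {x | ∃ ψ : ↥S ≃ ↥T, x = ∑ z, c z (ψ z)} := by
          rw [hcardA, hOPTH]
      _ ≤ ∑ v : ↥A × ↥S, c v.2 (Φ v).2 := core_assignment c Φ
      _ ≤ ∑ v : ↥A × ↥S, ((P.dist (v.1.1, v.2.1) ((Φ v).1.1, (Φ v).2.1) : ℕ) : ℝ) :=
          Finset.sum_le_sum fun v _ => hterm v
      _ = _ := hsum.symm
  -- optimal assignment on the H side
  obtain ⟨ψ, hψ⟩ : ∃ ψ : ↥S ≃ ↥T, OPTc H y1 y2 = ∑ z, c z (ψ z) := by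
    have := hCHne.csInf_mem hCHfin
    rw [← hOPTH] at this
    exact this
  -- the product assignment built from ψ
  let φ0 : ↥(Rside P (x1, y1) (x2, y2)) ≃ ↥(Rside P (x2, y2) (x1, y1)) :=
    E1.symm.trans ((Equiv.prodCongr (Equiv.refl ↥A) ψ).trans E2)
  have hφ0 : ∀ v : ↥A × ↥S, φ0 (E1 v) = E2 (v.1, ψ v.2) := by
    intro v
    simp [φ0, Equiv.prodCongr_apply, Prod.map]
  have hcost0 : cost P (x1, y1) (x2, y2) φ0 ≤ ((dG : ℝ) + 1) * OPTc H y1 y2 := by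
    rw [cost, tsum_fintype]
    have hsum : ∑ u : ↥(Rside P (x1, y1) (x2, y2)), ((P.dist u.1 (φ0 u).1 : ℕ) : ℝ)
        = ∑ v : ↥A × ↥S, ((P.dist (v.1.1, v.2.1) (v.1.1, (ψ v.2).1) : ℕ) : ℝ) := by
      rw [← Equiv.sum_comp E1 (fun u => ((P.dist u.1 (φ0 u).1 : ℕ) : ℝ))]
      refine Finset.sum_congr rfl fun v _ => ?_
      rw [hφ0 v]
      congr 1
    rw [hsum]
    have hterm : ∀ v : ↥A × ↥S,
        ((P.dist (v.1.1, v.2.1) (v.1.1, (ψ v.2).1) : ℕ) : ℝ) ≤ c v.2 (ψ v.2) := by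
      intro v
      have h := dist_P_le (G := G) (H := H) v.1.1 v.2.1 (ψ v.2).1
      show _ ≤ ((H.dist v.2.1 (ψ v.2).1 : ℕ) : ℝ)
      rw [hP]
      exact_mod_cast h
    calc ∑ v : ↥A × ↥S, ((P.dist (v.1.1, v.2.1) (v.1.1, (ψ v.2).1) : ℕ) : ℝ)
        ≤ ∑ v : ↥A × ↥S, c v.2 (ψ v.2) := Finset.sum_le_sum fun v _ => hterm v
      _ = ∑ a : ↥A, ∑ z : ↥S, c z (ψ z) := by rw [Fintype.sum_prod_type]
      _ = (Fintype.card ↥A : ℝ) * ∑ z : ↥S, c z (ψ z) := by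
          rw [Finset.sum_const, Finset.card_univ, nsmul_eq_mul]
      _ = ((dG : ℝ) + 1) * OPTc H y1 y2 := by rw [hcardA, hψ]
  -- the product-side cost set is nonempty and bounded below
  have hCPne : { x | ∃ φ : Rside P (x1, y1) (x2, y2) ≃ Rside P (x2, y2) (x1, y1),
      x = cost P (x1, y1) (x2, y2) φ }.Nonempty := ⟨_, φ0, rfl⟩
  have hCPbdd : BddBelow { x | ∃ φ : Rside P (x1, y1) (x2, y2) ≃ Rside P (x2, y2) (x1, y1),
      x = cost P (x1, y1) (x2, y2) φ } := by
    have : { x | ∃ φ : Rside P (x1, y1) (x2, y2) ≃ Rside P (x2, y2) (x1, y1),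
        x = cost P (x1, y1) (x2, y2) φ }
        = Set.range (fun φ : Rside P (x1, y1) (x2, y2) ≃ Rside P (x2, y2) (x1, y1) =>
            cost P (x1, y1) (x2, y2) φ) := by
      ext x; simp [eq_comm, Set.range]
    rw [this]
    exact (Set.finite_range _).bddBelow
  rw [OPTc]
  refine le_antisymm ?_ (le_csInf hCPne hlow)
  exact le_trans (csInf_le hCPbdd ⟨φ0, rfl⟩) hcost0
end
end

section
/- Let G be a locally finite graph and x, y adjacent vertices of equal degree d with |N(x) ∩ N(y)| = d − 1. Then κ_0(x,y) = κ_LLY(x,y) − 2/d. -/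
open SimpleGraph Filter Set

noncomputable section
attribute [local instance] Classical.propDecidable

variable {V α β : Type*}

namespace CurvAux
variable {V : Type*}

lemma summable_single (b : V) (a : ℝ) : Summable (fun v => if v = b then a else 0) :=
  summable_of_ne_finset_zero (s := {b}) (by intro v hv; simp at hv; simp [hv])

lemma tsum_single (b : V) (a : ℝ) : ∑' v, (if v = b then a else 0) = a :=
  tsum_ite_eq b (fun _ => a)

lemma summable_pair (b : V) (C : Prop) (a : ℝ) :
    Summable (fun v : V => if v = b ∧ C then a else 0) :=
  summable_of_ne_finset_zero (s := {b})
    (by intro v hv; simp only [Finset.mem_singleton] at hv; simp [hv])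

lemma tsum_pair (b : V) (C : Prop) (a : ℝ) :
    ∑' (v : V), (if v = b ∧ C then a else 0) = if C then a else 0 := by
  by_cases hC : C
  · rw [if_pos hC]
    rw [tsum_congr (fun v => (by simp [hC] : (if v = b ∧ C then a else 0) = if v = b then a else 0))]
    exact tsum_single b a
  · rw [if_neg hC]
    rw [tsum_congr (fun v => (by simp [hC] : (if v = b ∧ C then a else 0) = 0))]
    exact tsum_zero

lemma cost_nonneg (G : SimpleGraph V) {π : V → V → ℝ} (hπ : ∀ u v, 0 ≤ π u v) :
    0 ≤ ∑' u, ∑' v, (G.dist u v : ℝ) * π u v :=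
  tsum_nonneg fun u => tsum_nonneg fun v => mul_nonneg (Nat.cast_nonneg _) (hπ u v)

lemma wass_le (G : SimpleGraph V) (μ ν : V → ℝ) {π : V → V → ℝ}
    (hπ : ∀ u v, 0 ≤ π u v) (hrow : ∀ u, ∑' v, π u v = μ u)
    (hcol : ∀ v, ∑' u, π u v = ν v) :
    Wass G μ ν ≤ ∑' u, ∑' v, (G.dist u v : ℝ) * π u v := by
  apply csInf_le
  · exact ⟨0, fun c hc => by
      obtain ⟨π', h1, _, _, h4⟩ := hc
      rw [h4]; exact cost_nonneg G h1⟩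
  · exact ⟨π, hπ, hrow, hcol, rfl⟩

/-- Upper bound via explicit near-diagonal coupling. -/
lemma coupling_mem (G : SimpleGraph V) (p q : V) (hadj : G.Adj p q)
    (μ ν : V → ℝ) (hAgree : ∀ v, v ≠ p → v ≠ q → μ v = ν v)
    (h1 : ν p ≤ μ p) (h2 : μ q ≤ ν q) (hbal : μ p + μ q = ν p + ν q)
    (hμ0 : ∀ v, 0 ≤ μ v) (hν0 : ∀ v, 0 ≤ ν v) :
    (μ p - ν p) ∈ { c | ∃ π : V → V → ℝ, (∀ u v, 0 ≤ π u v) ∧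
      (∀ u, ∑' v, π u v = μ u) ∧ (∀ v, ∑' u, π u v = ν v) ∧
      c = ∑' u, ∑' v, (G.dist u v : ℝ) * π u v } := by
  classical
  set t : ℝ := μ p - ν p with ht
  have hpq : p ≠ q := hadj.ne
  have ht0 : 0 ≤ t := sub_nonneg.mpr h1
  set m : V → ℝ := fun u => min (μ u) (ν u) with hm
  set π : V → V → ℝ := fun u v =>
    (if v = u then m u else 0) + (if v = q ∧ u = p then t else 0) with hπdef
  have hπ : ∀ u v, 0 ≤ π u v := by
    intro u v
    simp only [hπdef]
    apply add_nonneg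
    · by_cases h : v = u
      · simp only [if_pos h]; exact le_min (hμ0 u) (hν0 u)
      · simp [h]
    · by_cases h : v = q ∧ u = p
      · simp only [if_pos h]; exact ht0
      · simp [h]
  have hmp : m p = ν p := min_eq_right h1
  have hmq : m q = μ q := min_eq_left h2
  have hrow : ∀ u, ∑' v, π u v = μ u := by
    intro u
    have e0 : ∑' v, π u v = (∑' v, (if v = u then m u else 0))
        + ∑' v, (if v = q ∧ u = p then t else 0) := by
      simp only [hπdef]
      exact Summable.tsum_add (summable_single u (m u)) (summable_pair q (u = p) t)
    rw [e0, tsum_single, tsum_pair]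
    by_cases hu : u = p
    · rw [if_pos hu, hu, hmp]; rw [ht]; ring
    · rw [if_neg hu, add_zero]
      by_cases hu' : u = q
      · rw [hu', hmq]
      · rw [hm]; simp only
        rw [hAgree u hu hu']; exact min_self _
  have hcol : ∀ v, ∑' u, π u v = ν v := by
    intro v
    have e1 : ∀ u, π u v = (if u = v then m v else 0) + (if u = p ∧ v = q then t else 0) := by
      intro u
      simp only [hπdef]
      congr 1
      · by_cases h : v = u
        · rw [if_pos h, if_pos h.symm, h]
        · rw [if_neg h, if_neg (fun hh : u = v => h hh.symm)]
      · by_cases h : v = q ∧ u = p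
        · rw [if_pos h, if_pos ⟨h.2, h.1⟩]
        · rw [if_neg h, if_neg (fun hh => h ⟨hh.2, hh.1⟩)]
    have e0 : ∑' u, π u v = (∑' u, (if u = v then m v else 0))
        + ∑' u, (if u = p ∧ v = q then t else 0) := by
      rw [tsum_congr e1]
      exact Summable.tsum_add (summable_single v (m v)) (summable_pair p (v = q) t)
    rw [e0, tsum_single, tsum_pair]
    by_cases hv : v = q
    · rw [if_pos hv, hv, hmq]; rw [ht]; linarith [hbal]
    · rw [if_neg hv, add_zero]
      by_cases hv' : v = p
      · rw [hv', hmp]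
      · rw [hm]; simp only
        rw [hAgree v hv' hv]; exact min_self _
  have hcost : ∑' u, ∑' v, (G.dist u v : ℝ) * π u v = t := by
    have hd1 : (G.dist p q : ℝ) = 1 := by
      rw [SimpleGraph.dist_eq_one_iff_adj.mpr hadj]; norm_num
    have inner : ∀ u, ∑' v, (G.dist u v : ℝ) * π u v = (if u = p then t else 0) := by
      intro u
      have e1 : ∀ v, (G.dist u v : ℝ) * π u v = (if v = q ∧ u = p then t else 0) := by
        intro v
        simp only [hπdef]
        rw [mul_add]
        have l1 : (G.dist u v : ℝ) * (if v = u then m u else 0) = 0 := by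
          by_cases h : v = u
          · rw [h, SimpleGraph.dist_self]; norm_num
          · rw [if_neg h, mul_zero]
        rw [l1, zero_add]
        by_cases h : v = q ∧ u = p
        · rw [if_pos h, h.1, h.2, hd1, one_mul]
        · rw [if_neg h, mul_zero]
      rw [tsum_congr e1, tsum_pair]
    rw [tsum_congr inner, tsum_single]
  exact ⟨π, hπ, hrow, hcol, hcost.symm⟩

lemma wass_bddBelow (G : SimpleGraph V) (μ ν : V → ℝ) :
    BddBelow { c | ∃ π : V → V → ℝ, (∀ u v, 0 ≤ π u v) ∧
      (∀ u, ∑' v, π u v = μ u) ∧ (∀ v, ∑' u, π u v = ν v) ∧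
      c = ∑' u, ∑' v, (G.dist u v : ℝ) * π u v } :=
  ⟨0, fun c hc => by
    obtain ⟨π', h1, _, _, h4⟩ := hc
    rw [h4]; exact cost_nonneg G h1⟩

lemma wass_le_of_coupling (G : SimpleGraph V) (p q : V) (hadj : G.Adj p q)
    (μ ν : V → ℝ) (hAgree : ∀ v, v ≠ p → v ≠ q → μ v = ν v)
    (h1 : ν p ≤ μ p) (h2 : μ q ≤ ν q) (hbal : μ p + μ q = ν p + ν q)
    (hμ0 : ∀ v, 0 ≤ μ v) (hν0 : ∀ v, 0 ≤ ν v) :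
    Wass G μ ν ≤ μ p - ν p :=
  csInf_le (wass_bddBelow G μ ν)
    (coupling_mem G p q hadj μ ν hAgree h1 h2 hbal hμ0 hν0)

end CurvAux
namespace CurvAux

/-- Lower bound for the Wasserstein distance on finite graphs via the
1-Lipschitz witness `f = 1_{p}`. -/
lemma le_wass_of_coupling [Finite V] (G : SimpleGraph V) (p : V) (μ ν : V → ℝ)
    (hp : ∀ v, ν v ≠ 0 → v ≠ p → 1 ≤ G.dist p v)
    {π : V → V → ℝ} (hπ : ∀ u v, 0 ≤ π u v) (hrow : ∀ u, ∑' v, π u v = μ u)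
    (hcol : ∀ v, ∑' u, π u v = ν v) :
    μ p - ν p ≤ ∑' u, ∑' v, (G.dist u v : ℝ) * π u v := by
  classical
  have : Fintype V := Fintype.ofFinite V
  have hrow' : ∀ u, ∑ v, π u v = μ u := fun u => by rw [← tsum_fintype (L := SummationFilter.unconditional V)]; exact hrow u
  have hcol' : ∀ v, ∑ u, π u v = ν v := fun v => by rw [← tsum_fintype (L := SummationFilter.unconditional V)]; exact hcol v
  have hc : ∑' u, ∑' v, (G.dist u v : ℝ) * π u v = ∑ u, ∑ v, (G.dist u v : ℝ) * π u v := by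
    rw [tsum_fintype]
    exact Finset.sum_congr rfl fun u _ => tsum_fintype _
  rw [hc]
  set f : V → ℝ := fun u => if u = p then 1 else 0 with hf
  have hf0 : ∀ u, 0 ≤ f u := by intro u; simp only [hf]; split <;> norm_num
  have hf1 : ∀ u, f u ≤ 1 := by intro u; simp only [hf]; split <;> norm_num
  have key : ∀ u v, (f u - f v) * π u v ≤ (G.dist u v : ℝ) * π u v := by
    intro u v
    rcases (hπ u v).eq_or_lt with h | h
    · rw [← h, mul_zero, mul_zero]
    · apply mul_le_mul_of_nonneg_right _ (le_of_lt h)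
      by_cases hu : u = p
      · by_cases hv : v = p
        · simp [hf, hu, hv]
        · have hν : ν v ≠ 0 := by
            have : π u v ≤ ν v := by
              rw [← hcol' v]
              exact Finset.single_le_sum (fun i _ => hπ i v) (Finset.mem_univ u)
            exact ne_of_gt (lt_of_lt_of_le h this)
          have hd : (1:ℝ) ≤ (G.dist p v : ℝ) := by
            exact_mod_cast Nat.one_le_cast.mpr (hp v hν hv)
          calc f u - f v ≤ 1 := by
                have := hf0 v; have := hf1 u; linarith
            _ ≤ (G.dist u v : ℝ) := by rw [hu]; exact hd
      · calc f u - f v ≤ 0 := by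
              have := hf0 v
              simp only [hf, if_neg hu]
              linarith
          _ ≤ (G.dist u v : ℝ) := Nat.cast_nonneg _
  calc μ p - ν p = ∑ u, f u * μ u - ∑ v, f v * ν v := by
        rw [show ∑ u, f u * μ u = μ p by
          simp only [hf, ite_mul, one_mul, zero_mul]
          rw [Finset.sum_ite_eq' Finset.univ p μ, if_pos (Finset.mem_univ p)]]
        rw [show ∑ v, f v * ν v = ν p by
          simp only [hf, ite_mul, one_mul, zero_mul]
          rw [Finset.sum_ite_eq' Finset.univ p ν, if_pos (Finset.mem_univ p)]]
    _ = ∑ u, ∑ v, (f u - f v) * π u v := by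
        have e1 : ∑ u, f u * μ u = ∑ u, ∑ v, f u * π u v := by
          apply Finset.sum_congr rfl
          intro u _
          rw [← hrow' u, Finset.mul_sum]
        have e2 : ∑ v, f v * ν v = ∑ v, ∑ u, f v * π u v := by
          apply Finset.sum_congr rfl
          intro v _
          rw [← hcol' v, Finset.mul_sum]
        rw [e1, e2, Finset.sum_comm (f := fun v u => f v * π u v)]
        rw [← Finset.sum_sub_distrib]
        apply Finset.sum_congr rfl
        intro u _
        rw [← Finset.sum_sub_distrib]
        apply Finset.sum_congr rfl
        intro v _
        ring
    _ ≤ ∑ u, ∑ v, (G.dist u v : ℝ) * π u v := by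
        apply Finset.sum_le_sum
        intro u _
        exact Finset.sum_le_sum fun v _ => key u v

/-- Exact value of the Wasserstein distance, on finite graphs, for measures that
differ only at the two endpoints of an edge. -/
lemma wass_eq [Finite V] (G : SimpleGraph V) (p q : V) (hadj : G.Adj p q)
    (μ ν : V → ℝ) (hAgree : ∀ v, v ≠ p → v ≠ q → μ v = ν v)
    (h1 : ν p ≤ μ p) (h2 : μ q ≤ ν q) (hbal : μ p + μ q = ν p + ν q)
    (hμ0 : ∀ v, 0 ≤ μ v) (hν0 : ∀ v, 0 ≤ ν v)
    (hp : ∀ v, ν v ≠ 0 → v ≠ p → 1 ≤ G.dist p v) :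
    Wass G μ ν = μ p - ν p := by
  apply le_antisymm (wass_le_of_coupling G p q hadj μ ν hAgree h1 h2 hbal hμ0 hν0)
  apply le_csInf
  · exact ⟨_, coupling_mem G p q hadj μ ν hAgree h1 h2 hbal hμ0 hν0⟩
  · rintro c ⟨π, hπ, hrow, hcol, rfl⟩
    exact le_wass_of_coupling G p μ ν hp hπ hrow hcol

end CurvAux
namespace CurvAux

lemma not_summable_of_const_le (c : ℝ) (hc : 0 < c) {f : ℕ → ℝ} (hf : ∀ n, c ≤ f n) :
    ¬ Summable f := by
  intro h
  have h0 : c ≤ 0 := ge_of_tendsto' h.tendsto_atTop_zero hf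
  linarith

/-- On graphs with a suitable infinite family of "far away" vertices, mass can be
smuggled at zero transport cost using non-summable couplings, so the optimal
transport cost degenerates to `0`. -/
lemma wass_eq_zero (G : SimpleGraph V) (μ ν : V → ℝ)
    (hμ0 : ∀ v, 0 ≤ μ v) (hν0 : ∀ v, 0 ≤ ν v)
    (hμs : (Function.support μ).Finite)
    (a : ℕ → V) (ha : Function.Injective a)
    (haμ : ∀ n, μ (a n) = 0) (haν : ∀ n, ν (a n) = 0)
    (HA : ∀ u, μ u ≠ 0 →
      (∀ j, G.dist u (a (2*j)) = 0) ∨ (∀ j, 2^(j+1) ≤ G.dist u (a (2*j))))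
    (HB : ∀ m,
      ((∀ j, G.dist (a (2*m+1)) (a (2*j)) = 0) ∧
        (∀ v, ν v ≠ 0 → G.dist (a (2*m+1)) v = 0)) ∨
      (∀ j, 1 ≤ G.dist (a (2*m+1)) (a (2*j)))) :
    Wass G μ ν = 0 := by
  classical
  have he : Function.Injective (fun j : ℕ => a (2*j)) := by
    intro i j h; have := ha h; omega
  have ho : Function.Injective (fun m : ℕ => a (2*m+1)) := by
    intro i j h; have := ha h; omega
  set w : V → ℝ := Function.extend (fun j : ℕ => a (2*j)) (fun j => (2:ℝ)⁻¹^(j+1)) 0 with hw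
  set gcol : V → ℝ := Function.extend (fun j : ℕ => a (2*j)) (fun _ => (1:ℝ)) 0 with hgcol
  set grow : V → ℝ := Function.extend (fun m : ℕ => a (2*m+1)) (fun _ => (1:ℝ)) 0 with hgrow
  have hwa : ∀ j, w (a (2*j)) = (2:ℝ)⁻¹^(j+1) := fun j => he.extend_apply _ _ j
  have hwa' : ∀ v, (¬∃ j, a (2*j) = v) → w v = 0 := fun v h =>
    Function.extend_apply' _ _ _ h
  have hgcola : ∀ j, gcol (a (2*j)) = 1 := fun j => he.extend_apply _ _ j
  have hgcola' : ∀ v, (¬∃ j, a (2*j) = v) → gcol v = 0 := fun v h =>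
    Function.extend_apply' _ _ _ h
  have hgrowa : ∀ m, grow (a (2*m+1)) = 1 := fun m => ho.extend_apply _ _ m
  have hgrowa' : ∀ v, (¬∃ m, a (2*m+1) = v) → grow v = 0 := fun v h =>
    Function.extend_apply' _ _ _ h
  have hodd_ne_even : ∀ m j, a (2*m+1) ≠ a (2*j) := by
    intro m j h; have := ha h; omega
  have hgrow_even : ∀ j, grow (a (2*j)) = 0 := by
    intro j; apply hgrowa'; rintro ⟨m, hm⟩; exact hodd_ne_even m j hm
  have hw_odd : ∀ m, w (a (2*m+1)) = 0 := by
    intro m; apply hwa'; rintro ⟨j, hj⟩; exact hodd_ne_even m j hj.symm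
  have hgcol_odd : ∀ m, gcol (a (2*m+1)) = 0 := by
    intro m; apply hgcola'; rintro ⟨j, hj⟩; exact hodd_ne_even m j hj.symm
  have hw0 : ∀ v, 0 ≤ w v := by
    intro v
    by_cases h : ∃ j, a (2*j) = v
    · obtain ⟨j, rfl⟩ := h; rw [hwa]; positivity
    · rw [hwa' v h]
  have hgcol0 : ∀ v, 0 ≤ gcol v := by
    intro v
    by_cases h : ∃ j, a (2*j) = v
    · obtain ⟨j, rfl⟩ := h; rw [hgcola]; norm_num
    · rw [hgcola' v h]
  have hgrow0 : ∀ v, 0 ≤ grow v := by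
    intro v
    by_cases h : ∃ m, a (2*m+1) = v
    · obtain ⟨m, rfl⟩ := h; rw [hgrowa]; norm_num
    · rw [hgrowa' v h]
  have not_summable_grow : ¬ Summable grow := by
    intro h
    refine not_summable_of_const_le 1 one_pos (fun m => ?_) (h.comp_injective ho)
    simp only [Function.comp_apply, hgrowa]
    exact le_refl 1
  have not_summable_gcol : ¬ Summable gcol := by
    intro h
    refine not_summable_of_const_le 1 one_pos (fun j => ?_) (h.comp_injective he)
    simp only [Function.comp_apply, hgcola]
    exact le_refl 1
  -- total mass of w is 1
  have hw1 : ∑' v, w v = 1 := by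
    have hsupp : Function.support w ⊆ Set.range (fun j : ℕ => a (2*j)) := by
      intro v hv
      by_contra hc
      exact hv (hwa' v (fun ⟨j, hj⟩ => hc ⟨j, hj⟩))
    rw [← he.tsum_eq hsupp]
    have : (fun j : ℕ => w (a (2*j))) = fun j : ℕ => (2:ℝ)⁻¹ * (2:ℝ)⁻¹^j := by
      funext j; rw [hwa]; ring
    rw [this, tsum_mul_left, tsum_geometric_of_lt_one (by norm_num) (by norm_num)]
    norm_num
  set π : V → V → ℝ := fun u v =>
    μ u * w v + (if u = a 1 then ν v else 0) + grow u * gcol v with hπdef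
  have hπ0 : ∀ u v, 0 ≤ π u v := by
    intro u v
    simp only [hπdef]
    have : 0 ≤ (if u = a 1 then ν v else 0) := by split; exacts [hν0 v, le_rfl]
    have := mul_nonneg (hμ0 u) (hw0 v)
    have := mul_nonneg (hgrow0 u) (hgcol0 v)
    linarith
  -- row marginals
  have hrow : ∀ u, ∑' v, π u v = μ u := by
    intro u
    by_cases hu : ∃ n, a n = u
    · obtain ⟨n, rfl⟩ := hu
      obtain ⟨m, rfl | rfl⟩ : ∃ m, n = 2*m ∨ n = 2*m+1 := ⟨n/2, by omega⟩
      · -- even garbage column index: zero row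
        have h1 : a (2*m) ≠ a 1 := by intro h; have := ha h; omega
        have : ∀ v, π (a (2*m)) v = 0 := by
          intro v
          simp only [hπdef, haμ, hgrow_even, if_neg h1]
          ring
        rw [tsum_congr this, tsum_zero, haμ]
      · -- odd garbage row: non-summable row, tsum = 0
        have hnots : ¬ Summable (fun v => π (a (2*m+1)) v) := by
          intro h
          apply not_summable_gcol
          apply Summable.of_nonneg_of_le hgcol0 _ h
          intro v
          simp only [hπdef, haμ, hgrowa, zero_mul, one_mul, zero_add]
          have : 0 ≤ (if a (2*m+1) = a 1 then ν v else 0) := by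
            split; exacts [hν0 v, le_rfl]
          linarith
        rw [tsum_eq_zero_of_not_summable hnots, haμ]
    · -- honest row
      have h1 : u ≠ a 1 := fun h => hu ⟨1, h.symm⟩
      have hgu : grow u = 0 := hgrowa' u (fun ⟨m, hm⟩ => hu ⟨2*m+1, hm⟩)
      have : ∀ v, π u v = μ u * w v := by
        intro v
        simp only [hπdef, if_neg h1, hgu]
        ring
      rw [tsum_congr this, tsum_mul_left, hw1, mul_one]
  -- column marginals
  have hcol : ∀ v, ∑' u, π u v = ν v := by
    intro v
    by_cases hv : ∃ j, a (2*j) = v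
    · obtain ⟨j, rfl⟩ := hv
      have hnots : ¬ Summable (fun u => π u (a (2*j))) := by
        intro h
        apply not_summable_grow
        apply Summable.of_nonneg_of_le hgrow0 _ h
        intro u
        simp only [hπdef, hgcola, mul_one]
        have h1 : 0 ≤ (if u = a 1 then ν (a (2*j)) else 0) := by
          split; exacts [hν0 _, le_rfl]
        have h2 := mul_nonneg (hμ0 u) (hw0 (a (2*j)))
        linarith
      rw [tsum_eq_zero_of_not_summable hnots, haν]
    · have hwv : w v = 0 := hwa' v hv
      have hgv : gcol v = 0 := hgcola' v hv
      have : ∀ u, π u v = (if u = a 1 then ν v else 0) := by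
        intro u
        simp only [hπdef, hwv, hgv]
        ring
      rw [tsum_congr this, tsum_single]
  -- all transport happens at distance 0 (or non-summably)
  have hcost : ∀ u, ∑' v, (G.dist u v : ℝ) * π u v = 0 := by
    intro u
    by_cases hu : ∃ n, a n = u
    · obtain ⟨n, rfl⟩ := hu
      obtain ⟨m, rfl | rfl⟩ : ∃ m, n = 2*m ∨ n = 2*m+1 := ⟨n/2, by omega⟩
      · have h1 : a (2*m) ≠ a 1 := by intro h; have := ha h; omega
        have : ∀ v, (G.dist (a (2*m)) v : ℝ) * π (a (2*m)) v = 0 := by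
          intro v
          simp only [hπdef, haμ, hgrow_even, if_neg h1]
          ring
        rw [tsum_congr this, tsum_zero]
      · rcases HB m with ⟨hd0, hdν⟩ | hd1
        · -- all relevant distances are 0
          have : ∀ v, (G.dist (a (2*m+1)) v : ℝ) * π (a (2*m+1)) v = 0 := by
            intro v
            by_cases hv : ∃ j, a (2*j) = v
            · obtain ⟨j, rfl⟩ := hv
              rw [hd0 j]; norm_num
            · have hgv : gcol v = 0 := hgcola' v hv
              by_cases hν : ν v = 0
              · simp [hπdef, haμ, hgv, hν]
              · rw [hdν v hν]; norm_num
          rw [tsum_congr this, tsum_zero]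
        · -- non-summable cost row
          have hπval : ∀ j, π (a (2*m+1)) (a (2*j)) = 1 := by
            intro j
            simp only [hπdef, haμ, haν, hgrowa, hgcola, zero_mul, one_mul, ite_self]
            ring
          have hnots : ¬ Summable (fun v => (G.dist (a (2*m+1)) v : ℝ) * π (a (2*m+1)) v) := by
            intro h
            refine not_summable_of_const_le 1 one_pos (fun j => ?_) (h.comp_injective he)
            simp only [Function.comp_apply]
            rw [hπval j, mul_one]
            exact_mod_cast Nat.one_le_cast.mpr (hd1 j)
          rw [tsum_eq_zero_of_not_summable hnots]
    · have h1 : u ≠ a 1 := fun h => hu ⟨1, h.symm⟩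
      have hgu : grow u = 0 := hgrowa' u (fun ⟨m, hm⟩ => hu ⟨2*m+1, hm⟩)
      have hπu : ∀ v, π u v = μ u * w v := by
        intro v
        simp only [hπdef, if_neg h1, hgu]
        ring
      by_cases hμu : μ u = 0
      · have : ∀ v, (G.dist u v : ℝ) * π u v = 0 := by
          intro v; rw [hπu, hμu]; ring
        rw [tsum_congr this, tsum_zero]
      · rcases HA u hμu with h0 | hbig
        · have : ∀ v, (G.dist u v : ℝ) * π u v = 0 := by
            intro v
            by_cases hv : ∃ j, a (2*j) = v
            · obtain ⟨j, rfl⟩ := hv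
              rw [h0 j]; norm_num
            · rw [hπu, hwa' v hv]; ring
          rw [tsum_congr this, tsum_zero]
        · have hμpos : 0 < μ u := lt_of_le_of_ne (hμ0 u) (Ne.symm hμu)
          have hnots : ¬ Summable (fun v => (G.dist u v : ℝ) * π u v) := by
            intro h
            refine not_summable_of_const_le (μ u) hμpos (fun j => ?_) (h.comp_injective he)
            simp only [Function.comp_apply]
            rw [hπu, hwa]
            have hda : (2:ℝ)^(j+1) ≤ (G.dist u (a (2*j)) : ℝ) := by
              exact_mod_cast hbig j
            have hkey : (2:ℝ)^(j+1) * ((2:ℝ)⁻¹^(j+1)) = 1 := by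
              rw [← mul_pow]; norm_num
            calc μ u = ((2:ℝ)^(j+1) * ((2:ℝ)⁻¹^(j+1))) * μ u := by rw [hkey]; ring
              _ = (2:ℝ)^(j+1) * (μ u * (2:ℝ)⁻¹^(j+1)) := by ring
              _ ≤ (G.dist u (a (2*j)) : ℝ) * (μ u * (2:ℝ)⁻¹^(j+1)) :=
                  mul_le_mul_of_nonneg_right hda (by positivity)
          rw [tsum_eq_zero_of_not_summable hnots]
  -- conclusion
  have hmem : (0:ℝ) ∈ { c | ∃ π : V → V → ℝ, (∀ u v, 0 ≤ π u v) ∧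
      (∀ u, ∑' v, π u v = μ u) ∧ (∀ v, ∑' u, π u v = ν v) ∧
      c = ∑' u, ∑' v, (G.dist u v : ℝ) * π u v } := by
    refine ⟨π, hπ0, hrow, hcol, ?_⟩
    rw [tsum_congr hcost, tsum_zero]
  apply le_antisymm
  · exact csInf_le (wass_bddBelow G μ ν) hmem
  · apply le_csInf ⟨0, hmem⟩
    rintro c ⟨π', h1, _, _, rfl⟩
    exact cost_nonneg G h1

end CurvAux
namespace CurvAux

lemma dist_triangle_reach {G : SimpleGraph V} {u v w : V}
    (h1 : G.Reachable u v) (h2 : G.Reachable v w) :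
    G.dist u w ≤ G.dist u v + G.dist v w := by
  obtain ⟨p, hp⟩ := h1.exists_walk_length_eq_dist
  obtain ⟨q, hq⟩ := h2.exists_walk_length_eq_dist
  calc G.dist u w ≤ (p.append q).length := SimpleGraph.dist_le _
    _ = G.dist u v + G.dist v w := by rw [SimpleGraph.Walk.length_append, hp, hq]

lemma ball_finite (G : SimpleGraph V) [G.LocallyFinite] (x : V) :
    ∀ n : ℕ, {v | G.Reachable x v ∧ G.dist x v ≤ n}.Finite := by
  intro n
  induction n with
  | zero =>
    apply Set.Finite.subset (Set.finite_singleton x)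
    rintro v ⟨hr, hd⟩
    have : G.dist x v = 0 := Nat.le_zero.mp hd
    have := (hr.dist_eq_zero_iff).mp this
    simp [this.symm]
  | succ n ih =>
    apply Set.Finite.subset
      (ih.union (Set.Finite.biUnion ih (fun u _ => (G.neighborSet u).toFinite)))
    rintro v ⟨hr, hd⟩
    by_cases hdn : G.dist x v ≤ n
    · exact Or.inl ⟨hr, hdn⟩
    · right
      have hdv : G.dist x v = n + 1 := le_antisymm hd (by omega)
      obtain ⟨p, hp⟩ := hr.exists_walk_length_eq_dist
      have hplen : p.length = n + 1 := by rw [hp, hdv]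
      have hrev : p.reverse.length = n + 1 := by
        rw [SimpleGraph.Walk.length_reverse, hplen]
      obtain ⟨u, hadj, q, hq⟩ : ∃ u, G.Adj v u ∧ ∃ q : G.Walk u x, q.length = n := by
        cases hpr : p.reverse with
        | nil => rw [hpr] at hrev; simp at hrev
        | cons hadj q =>
          rw [hpr] at hrev
          simp only [SimpleGraph.Walk.length_cons] at hrev
          exact ⟨_, hadj, q, by omega⟩
      have hu : u ∈ {v | G.Reachable x v ∧ G.dist x v ≤ n} :=
        ⟨⟨q.reverse⟩, le_trans (SimpleGraph.dist_le q.reverse)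
          (by rw [SimpleGraph.Walk.length_reverse, hq])⟩
      exact Set.mem_biUnion hu hadj.symm

lemma exists_far (G : SimpleGraph V) [G.LocallyFinite] (x : V)
    (hK : {v | G.Reachable x v}.Infinite) :
    ∀ R : ℕ, ∃ v, G.Reachable x v ∧ R < G.dist x v := by
  intro R
  by_contra hc
  push_neg at hc
  apply hK
  apply Set.Finite.subset (ball_finite G x R)
  intro v hv
  exact ⟨hv, hc v hv⟩

/-- The key combinatorial input for the infinite case: one can always find an
injective sequence avoiding the relevant neighborhoods and satisfying the
distance dichotomies. -/
lemma exists_good_seq (G : SimpleGraph V) [G.LocallyFinite] [Infinite V] (x : V) :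
    ∃ a : ℕ → V, Function.Injective a ∧
      (∀ n, ¬(G.Reachable x (a n) ∧ G.dist x (a n) ≤ 2)) ∧
      (∀ u, G.Reachable x u → G.dist x u ≤ 2 →
        (∀ j, G.dist u (a (2*j)) = 0) ∨ (∀ j, 2^(j+1) ≤ G.dist u (a (2*j)))) ∧
      (∀ m,
        ((∀ j, G.dist (a (2*m+1)) (a (2*j)) = 0) ∧
          (∀ v, G.Reachable x v → G.dist x v ≤ 2 → G.dist (a (2*m+1)) v = 0)) ∨
        (∀ j, 1 ≤ G.dist (a (2*m+1)) (a (2*j)))) := by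
  classical
  by_cases hK : {v | G.Reachable x v}.Infinite
  · -- Case I: x's component is infinite, distances unbounded
    have far := exists_far G x hK
    -- recursively build a sequence with strictly increasing, fast growing distances
    have step : ∀ R : ℕ, ∃ v, G.Reachable x v ∧ R < G.dist x v := far
    let F : ℕ → V := fun n => Nat.rec (Classical.choose (step (2^1 + 2)))
      (fun n prev => Classical.choose (step (max (G.dist x prev) (2^(n+2) + 2)))) n
    have hF0 : G.Reachable x (F 0) ∧ 2^1 + 2 < G.dist x (F 0) :=
      Classical.choose_spec (step (2^1 + 2))
    have hFs : ∀ n, G.Reachable x (F (n+1)) ∧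
        max (G.dist x (F n)) (2^(n+2) + 2) < G.dist x (F (n+1)) := fun n =>
      Classical.choose_spec (step (max (G.dist x (F n)) (2^(n+2) + 2)))
    have hreach : ∀ n, G.Reachable x (F n) := by
      intro n; cases n with
      | zero => exact hF0.1
      | succ n => exact (hFs n).1
    have hgrowth : ∀ n, 2^(n+1) + 2 < G.dist x (F n) := by
      intro n; cases n with
      | zero => exact hF0.2
      | succ n => exact lt_of_le_of_lt (le_max_right _ _) (hFs n).2
    have hmono : StrictMono (fun n => G.dist x (F n)) := by
      apply strictMono_nat_of_lt_succ
      intro n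
      exact lt_of_le_of_lt (le_max_left _ _) (hFs n).2
    have hinj : Function.Injective F := by
      intro i j h
      have hD : G.dist x (F i) = G.dist x (F j) := by rw [h]
      exact hmono.injective hD
    refine ⟨F, hinj, ?_, ?_, ?_⟩
    · intro n ⟨_, hd⟩
      have := hgrowth n
      have : 2^(n+1) ≥ 2 := by
        calc 2^(n+1) ≥ 2^1 := Nat.pow_le_pow_right (by norm_num) (by omega)
          _ = 2 := by norm_num
      omega
    · intro u hru hdu
      right
      intro j
      have htri : G.dist x (F (2*j)) ≤ G.dist x u + G.dist u (F (2*j)) :=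
        dist_triangle_reach hru (hru.symm.trans (hreach (2*j)))
      have := hgrowth (2*j)
      have h2j : 2^(j+1) ≤ 2^(2*j+1) := Nat.pow_le_pow_right (by norm_num) (by omega)
      omega
    · intro m
      right
      intro j
      have hne : F (2*m+1) ≠ F (2*j) := by
        intro h; have := hinj (a₁ := 2*m+1) (a₂ := 2*j) h; omega
      exact ((hreach (2*m+1)).symm.trans (hreach (2*j))).pos_dist_of_ne hne
  · -- x's component is finite
    have hKfin : {v | G.Reachable x v}.Finite := Set.not_infinite.mp hK
    have hKc : ({v | G.Reachable x v}ᶜ : Set V).Infinite := hKfin.infinite_compl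
    have hsub : ∀ v, G.Reachable x v → G.dist x v ≤ 2 → v ∈ {v | G.Reachable x v} :=
      fun v h _ => h
    by_cases hC : ∃ v, ¬G.Reachable x v ∧ {w | G.Reachable v w}.Infinite
    · -- Case IIa: some other component is infinite
      obtain ⟨v₀, hv₀, hCinf⟩ := hC
      let e := hCinf.natEmbedding
      let F : ℕ → V := fun n => (e n : V)
      have hFC : ∀ n, G.Reachable v₀ (F n) := fun n => (e n).2
      have hinj : Function.Injective F := fun i j h => e.injective (Subtype.ext h)
      have hFnotK : ∀ n, ¬G.Reachable x (F n) := by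
        intro n hr
        exact hv₀ (hr.trans (hFC n).symm)
      refine ⟨F, hinj, ?_, ?_, ?_⟩
      · rintro n ⟨hr, _⟩; exact hFnotK n hr
      · intro u hru _
        left
        intro j
        apply SimpleGraph.dist_eq_zero_of_not_reachable
        intro hr
        exact hFnotK (2*j) (hru.trans hr)
      · intro m
        right
        intro j
        have hne : F (2*m+1) ≠ F (2*j) := by
          intro h; have := hinj h; omega
        exact ((hFC (2*m+1)).symm.trans (hFC (2*j))).pos_dist_of_ne hne
    · -- Case IIb: all other components are finite, so there are infinitely many
      push_neg at hC
      have himg : (G.connectedComponentMk '' {v | G.Reachable x v}ᶜ).Infinite := by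
        intro hfin
        apply hKc
        have : ({v | G.Reachable x v}ᶜ : Set V) ⊆
            ⋃ c ∈ G.connectedComponentMk '' {v | G.Reachable x v}ᶜ,
              {w | G.connectedComponentMk w = c} := by
          intro v hv
          exact Set.mem_biUnion (Set.mem_image_of_mem _ hv) rfl
        apply Set.Finite.subset _ this
        apply Set.Finite.biUnion hfin
        rintro c ⟨v, hv, rfl⟩
        apply Set.Finite.subset (hC v hv)
        intro w hw
        exact (SimpleGraph.ConnectedComponent.eq.mp hw).symm
      let e := himg.natEmbedding
      let F : ℕ → V := fun n => (e n : G.ConnectedComponent).out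
      have hFmk : ∀ n, G.connectedComponentMk (F n) = (e n : G.ConnectedComponent) :=
        fun n => (e n : G.ConnectedComponent).out_eq
      have hinj : Function.Injective F := by
        intro i j h
        apply e.injective
        apply Subtype.ext
        rw [← hFmk i, ← hFmk j, h]
      have hnotreach : ∀ i j, i ≠ j → ¬G.Reachable (F i) (F j) := by
        intro i j hij hr
        have : (e i : G.ConnectedComponent) = (e j : G.ConnectedComponent) := by
          rw [← hFmk i, ← hFmk j]
          exact SimpleGraph.ConnectedComponent.eq.mpr hr
        exact hij (e.injective (Subtype.ext this))
      have hFnotK : ∀ n, ¬G.Reachable x (F n) := by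
        intro n hr
        obtain ⟨v, hv, hveq⟩ := (e n).2
        apply hv
        have : G.Reachable v (F n) := by
          apply SimpleGraph.ConnectedComponent.eq.mp
          rw [hFmk n, ← hveq]
        exact hr.trans this.symm
      refine ⟨F, hinj, ?_, ?_, ?_⟩
      · rintro n ⟨hr, _⟩; exact hFnotK n hr
      · intro u hru _
        left
        intro j
        apply SimpleGraph.dist_eq_zero_of_not_reachable
        intro hr
        exact hFnotK (2*j) (hru.trans hr)
      · intro m
        left
        constructor
        · intro j
          apply SimpleGraph.dist_eq_zero_of_not_reachable
          apply hnotreach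
          omega
        · intro v hrv _
          apply SimpleGraph.dist_eq_zero_of_not_reachable
          intro hr
          exact hFnotK (2*m+1) (hrv.trans hr.symm)

end CurvAux
namespace CurvAux

lemma adj_iff_of_triangle_full (G : SimpleGraph V) [G.LocallyFinite] (x y : V)
    (hxy : G.Adj x y) (d : ℕ) (hx : G.degree x = d) (hy : G.degree y = d)
    (hΔ : Nat.card ↥(G.neighborSet x ∩ G.neighborSet y) = d - 1) :
    ∀ v, v ≠ x → v ≠ y → (G.Adj x v ↔ G.Adj y v) := by
  classical
  have hd1 : 1 ≤ d := by
    rw [← hx]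
    exact (SimpleGraph.degree_pos_iff_exists_adj G x).mpr ⟨y, hxy⟩
  have hΔ' : (G.neighborSet x ∩ G.neighborSet y).ncard = d - 1 := by
    rw [← Nat.card_coe_set_eq]; exact hΔ
  have hNxfin : (G.neighborSet x).Finite := (G.neighborSet x).toFinite
  have hNyfin : (G.neighborSet y).Finite := (G.neighborSet y).toFinite
  have hNx_card : (G.neighborSet x).ncard = d := by
    rw [Set.ncard_eq_toFinset_card' (G.neighborSet x)]
    rw [← hx]; rfl
  have hNy_card : (G.neighborSet y).ncard = d := by
    rw [Set.ncard_eq_toFinset_card' (G.neighborSet y)]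
    rw [← hy]; rfl
  have hyNx : y ∈ G.neighborSet x := hxy
  have hxNy : x ∈ G.neighborSet y := hxy.symm
  -- A = N(x) \ {y}
  have hxside : G.neighborSet x ∩ G.neighborSet y = G.neighborSet x \ {y} := by
    apply Set.eq_of_subset_of_ncard_le
    · rintro z ⟨hzx, hzy⟩
      refine ⟨hzx, ?_⟩
      simp only [Set.mem_singleton_iff]
      intro h
      rw [h] at hzy
      exact G.loopless.irrefl y hzy
    · rw [Set.ncard_diff_singleton_of_mem hyNx, hNx_card, hΔ']
    · exact hNxfin.diff
  have hyside : G.neighborSet x ∩ G.neighborSet y = G.neighborSet y \ {x} := by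
    apply Set.eq_of_subset_of_ncard_le
    · rintro z ⟨hzx, hzy⟩
      refine ⟨hzy, ?_⟩
      simp only [Set.mem_singleton_iff]
      intro h
      rw [h] at hzx
      exact G.loopless.irrefl x hzx
    · rw [Set.ncard_diff_singleton_of_mem hxNy, hNy_card, hΔ']
    · exact hNyfin.diff
  intro v hvx hvy
  constructor
  · intro h
    have : v ∈ G.neighborSet x \ {y} := ⟨h, by simpa using hvy⟩
    rw [← hxside, hyside] at this
    exact this.1
  · intro h
    have : v ∈ G.neighborSet y \ {x} := ⟨h, by simpa using hvx⟩
    rw [← hyside, hxside] at this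
    exact this.1

end CurvAux
theorem kap0_eq_lly_sub_of_triangle_full (G : SimpleGraph V) [G.LocallyFinite]
    (x y : V) (hxy : G.Adj x y) (d : ℕ) (hx : G.degree x = d) (hy : G.degree y = d)
    (hΔ : Nat.card ↥(G.neighborSet x ∩ G.neighborSet y) = d - 1)
    (k : ℝ) (hk : IsLLY G x y k) :
    kap0 G x y = k - 2 / (d : ℝ) := by
  classical
  have hd1 : 1 ≤ d := by
    rw [← hx]; exact (SimpleGraph.degree_pos_iff_exists_adj G x).mpr ⟨y, hxy⟩
  have hdR : (0:ℝ) < (d:ℝ) := by exact_mod_cast hd1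
  have hiff := CurvAux.adj_iff_of_triangle_full G x y hxy d hx hy hΔ
  have hμx : ∀ α : ℝ, muMeas G α x x = α := fun α => if_pos rfl
  have hνy : ∀ α : ℝ, muMeas G α y y = α := fun α => if_pos rfl
  have hμy : ∀ α : ℝ, muMeas G α x y = (1-α)/(d:ℝ) := by
    intro α
    simp only [muMeas]
    rw [if_neg hxy.ne', if_pos hxy, hx]
  have hνx : ∀ α : ℝ, muMeas G α y x = (1-α)/(d:ℝ) := by
    intro α
    simp only [muMeas]
    rw [if_neg hxy.ne, if_pos hxy.symm, hy]
  have hagree : ∀ (α : ℝ) v, v ≠ x → v ≠ y → muMeas G α x v = muMeas G α y v := by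
    intro α v hvx hvy
    simp only [muMeas]
    rw [if_neg hvx, if_neg hvy]
    by_cases h : G.Adj x v
    · rw [if_pos h, if_pos ((hiff v hvx hvy).mp h), hx, hy]
    · rw [if_neg h, if_neg (fun h' => h ((hiff v hvx hvy).mpr h'))]
  have hsuppμ : ∀ (α : ℝ) v, muMeas G α x v ≠ 0 → v = x ∨ G.Adj x v := by
    intro α v h
    simp only [muMeas] at h
    by_cases h1 : v = x
    · exact Or.inl h1
    · rw [if_neg h1] at h
      by_cases h2 : G.Adj x v
      · exact Or.inr h2
      · rw [if_neg h2] at h; exact absurd rfl h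
  have hsuppν : ∀ (α : ℝ) v, muMeas G α y v ≠ 0 → v = y ∨ G.Adj y v := by
    intro α v h
    simp only [muMeas] at h
    by_cases h1 : v = y
    · exact Or.inl h1
    · rw [if_neg h1] at h
      by_cases h2 : G.Adj y v
      · exact Or.inr h2
      · rw [if_neg h2] at h; exact absurd rfl h
  have hμ0 : ∀ α : ℝ, 0 ≤ α → α ≤ 1 → ∀ v, 0 ≤ muMeas G α x v := by
    intro α h0 h1 v
    simp only [muMeas]
    split
    · exact h0
    · split
      · exact div_nonneg (by linarith) (Nat.cast_nonneg _)
      · exact le_rfl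
  have hν0 : ∀ α : ℝ, 0 ≤ α → α ≤ 1 → ∀ v, 0 ≤ muMeas G α y v := by
    intro α h0 h1 v
    simp only [muMeas]
    split
    · exact h0
    · split
      · exact div_nonneg (by linarith) (Nat.cast_nonneg _)
      · exact le_rfl
  have hreachμ : ∀ (α : ℝ) v, muMeas G α x v ≠ 0 →
      G.Reachable x v ∧ G.dist x v ≤ 2 := by
    intro α v h
    rcases hsuppμ α v h with rfl | hadj
    · exact ⟨SimpleGraph.Reachable.refl v, by rw [SimpleGraph.dist_self]; omega⟩
    · exact ⟨hadj.reachable, by rw [SimpleGraph.dist_eq_one_iff_adj.mpr hadj]; omega⟩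
  have hreachν : ∀ (α : ℝ) v, muMeas G α y v ≠ 0 →
      G.Reachable x v ∧ G.dist x v ≤ 2 := by
    intro α v h
    rcases hsuppν α v h with rfl | hadj
    · exact ⟨hxy.reachable, by rw [SimpleGraph.dist_eq_one_iff_adj.mpr hxy]; omega⟩
    · refine ⟨hxy.reachable.trans hadj.reachable, ?_⟩
      calc G.dist x v ≤ G.dist x y + G.dist y v :=
            CurvAux.dist_triangle_reach hxy.reachable hadj.reachable
        _ ≤ 2 := by
            rw [SimpleGraph.dist_eq_one_iff_adj.mpr hxy,
              SimpleGraph.dist_eq_one_iff_adj.mpr hadj]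
  by_cases hfin : Finite V
  · -- finite graph: honest computation
    haveI : Finite V := hfin
    have hWα : ∀ α : ℝ, 1/((d:ℝ)+1) < α → α < 1 →
        Wass G (muMeas G α x) (muMeas G α y) = α - (1-α)/(d:ℝ) := by
      intro α hlo hhi
      have hα0 : 0 < α := lt_trans (by positivity) hlo
      have hkey : 1 < α * ((d:ℝ)+1) := by
        rw [div_lt_iff₀ (by positivity)] at hlo; linarith
      have h1 : muMeas G α y x ≤ muMeas G α x x := by
        rw [hνx, hμx, div_le_iff₀ hdR]; nlinarith
      have h2 : muMeas G α x y ≤ muMeas G α y y := by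
        rw [hμy, hνy, div_le_iff₀ hdR]; nlinarith
      have hp : ∀ v, muMeas G α y v ≠ 0 → v ≠ x → 1 ≤ G.dist x v := by
        intro v hv hvx
        rcases hsuppν α v hv with rfl | hadj
        · rw [SimpleGraph.dist_eq_one_iff_adj.mpr hxy]
        · have hvy : v ≠ y := fun h => G.loopless.irrefl y (h ▸ hadj)
          rw [SimpleGraph.dist_eq_one_iff_adj.mpr ((hiff v hvx hvy).mpr hadj)]
      have := CurvAux.wass_eq G x y hxy (muMeas G α x) (muMeas G α y)
        (fun v hvx hvy => hagree α v hvx hvy) h1 h2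
        (by rw [hμx, hμy, hνx, hνy]; ring)
        (hμ0 α hα0.le hhi.le) (hν0 α hα0.le hhi.le) hp
      rw [this, hμx, hνx]
    have hW0 : Wass G (muMeas G 0 x) (muMeas G 0 y) = 1/(d:ℝ) := by
      have hp : ∀ v, muMeas G 0 y v ≠ 0 → v ≠ y → 1 ≤ G.dist y v := by
        intro v hv hvy
        rcases hsuppν 0 v hv with rfl | hadj
        · exact absurd rfl hvy
        · rw [SimpleGraph.dist_eq_one_iff_adj.mpr hadj]
      have := CurvAux.wass_eq G y x hxy.symm (muMeas G 0 x) (muMeas G 0 y)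
        (fun v hvy hvx => hagree 0 v hvx hvy)
        (by rw [hνy, hμy]; positivity)
        (by rw [hμx, hνx]; positivity)
        (by rw [hμy, hμx, hνy, hνx]; ring)
        (hμ0 0 le_rfl zero_le_one) (hν0 0 le_rfl zero_le_one) hp
      rw [this, hμy, hνy]
      norm_num
    have hkap0 : kap0 G x y = 1 - 1/(d:ℝ) := by
      rw [kap0, kap, hW0]
    have hclt : 1/((d:ℝ)+1) < 1 := by
      rw [div_lt_one (by positivity)]
      have : (1:ℝ) ≤ (d:ℝ) := Nat.one_le_cast.mpr hd1
      linarith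
    have hev : ∀ᶠ α in nhdsWithin (1:ℝ) (Set.Iio 1),
        kap G α x y / (1-α) = 1 + 1/(d:ℝ) := by
      filter_upwards [Ioo_mem_nhdsLT_of_mem
        (show (1:ℝ) ∈ Set.Ioc (1/((d:ℝ)+1)) 1 from ⟨hclt, le_rfl⟩)] with α hα
      rw [kap, hWα α hα.1 hα.2]
      have hne : 1 - α ≠ 0 := ne_of_gt (by linarith [hα.2])
      field_simp
      ring
    have hev' : (fun α : ℝ => kap G α x y / (1-α))
        =ᶠ[nhdsWithin (1:ℝ) (Set.Iio 1)] (fun _ => 1 + 1/(d:ℝ)) := hev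
    have hkval : k = 1 + 1/(d:ℝ) :=
      tendsto_nhds_unique hk (Filter.Tendsto.congr' hev'.symm tendsto_const_nhds)
    rw [hkap0, hkval]
    ring
  · -- infinite graph: the LLY limit cannot exist, contradiction
    haveI : Infinite V := not_finite_iff_infinite.mp hfin
    obtain ⟨a, hainj, hanot, hHA, hHB⟩ := CurvAux.exists_good_seq G x
    have hWz : ∀ α : ℝ, 0 ≤ α → α ≤ 1 →
        Wass G (muMeas G α x) (muMeas G α y) = 0 := by
      intro α h0 h1
      apply CurvAux.wass_eq_zero G _ _ (hμ0 α h0 h1) (hν0 α h0 h1) ?_ a hainj ?_ ?_ ?_ ?_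
      · apply Set.Finite.subset (((G.neighborSet x).toFinite).insert x)
        intro v hv
        rcases hsuppμ α v hv with rfl | h
        · exact Set.mem_insert _ _
        · exact Set.mem_insert_of_mem _ h
      · intro n
        by_contra h
        exact hanot n (hreachμ α (a n) h)
      · intro n
        by_contra h
        exact hanot n (hreachν α (a n) h)
      · intro u hu
        obtain ⟨hr, hd2⟩ := hreachμ α u hu
        exact hHA u hr hd2
      · intro m
        rcases hHB m with ⟨h1', h2'⟩ | h1'
        · exact Or.inl ⟨h1', fun v hv =>
            h2' v (hreachν α v hv).1 (hreachν α v hv).2⟩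
        · exact Or.inr h1'
    have hev : ∀ᶠ α in nhdsWithin (1:ℝ) (Set.Iio 1),
        kap G α x y / (1-α) = (1-α)⁻¹ := by
      filter_upwards [Ioo_mem_nhdsLT_of_mem
        (show (1:ℝ) ∈ Set.Ioc 0 1 from ⟨one_pos, le_rfl⟩)] with α hα
      rw [kap, hWz α hα.1.le hα.2.le, sub_zero, one_div]
    have hsub : Filter.Tendsto (fun α : ℝ => 1 - α)
        (nhdsWithin (1:ℝ) (Set.Iio 1)) (nhdsWithin (0:ℝ) (Set.Ioi 0)) := by
      apply tendsto_nhdsWithin_of_tendsto_nhds_of_eventually_within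
      · have h' : Filter.Tendsto (fun α : ℝ => 1 - α) (nhds 1) (nhds (1-1)) :=
          (continuous_const.sub continuous_id).tendsto 1
        simpa using h'.mono_left nhdsWithin_le_nhds
      · filter_upwards [self_mem_nhdsWithin] with α hα
        simp only [Set.mem_Iio] at hα
        exact Set.mem_Ioi.mpr (by linarith)
    have hev' : (fun α : ℝ => kap G α x y / (1-α))
        =ᶠ[nhdsWithin (1:ℝ) (Set.Iio 1)] (fun α : ℝ => (1-α)⁻¹) := hev
    have htop : Filter.Tendsto (fun α : ℝ => kap G α x y / (1-α))
        (nhdsWithin (1:ℝ) (Set.Iio 1)) Filter.atTop :=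
      Filter.Tendsto.congr' hev'.symm (tendsto_inv_nhdsGT_zero.comp hsub)
    exact absurd hk (not_tendsto_nhds_of_tendsto_atTop htop k)
end
end

section
/- Let G and H be regular graphs with degrees d_G and d_H, x ∈ V(G), and y1y2 ∈ E(H). Then there exists an optimal assignment φ between R_{(x,y1)}((x,y1),(x,y2)) and R_{(x,y2)}((x,y1),(x,y2)) in the Cartesian product G □ H such that φ((x', y1)) = (x', y2) for every x' ∈ N_G(x). -/
open SimpleGraph Filter Set

noncomputable section
attribute [local instance] Classical.propDecidable

variable {V α β : Type*}

lemma mem_Rside_iff (H : SimpleGraph V) (y1 y2 d : V) :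
    d ∈ Rside H y1 y2 ↔ H.Adj y1 d ∧ ¬H.Adj y2 d ∧ d ≠ y2 := by
  simp only [Rside, Set.mem_diff, SimpleGraph.mem_neighborSet, Set.mem_union,
    Set.mem_inter_iff, Set.mem_singleton_iff]
  tauto

lemma mem_RsideBox_iff (G : SimpleGraph α) (H : SimpleGraph β) {y1 y2 : β} (hy : H.Adj y1 y2)
    (x : α) (p : α × β) :
    p ∈ Rside (G.boxProd H) (x, y1) (x, y2) ↔
      (G.Adj x p.1 ∧ p.2 = y1) ∨ (p.1 = x ∧ p.2 ∈ Rside H y1 y2) := by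
  obtain ⟨a, b⟩ := p
  have hne : y1 ≠ y2 := hy.ne
  simp only [Rside, Set.mem_diff, SimpleGraph.mem_neighborSet, SimpleGraph.boxProd_adj,
    Set.mem_union, Set.mem_inter_iff, Set.mem_singleton_iff, Prod.mk.injEq,
    mem_Rside_iff]
  constructor
  · rintro ⟨h1, h2⟩
    rcases h1 with ⟨hga, rfl⟩ | ⟨hhb, rfl⟩
    · exact Or.inl ⟨hga, rfl⟩
    · refine Or.inr ⟨rfl, hhb, ?_⟩
      rintro (⟨-, h⟩ | h)
      · exact h2 (Or.inl ⟨Or.inr ⟨hhb, rfl⟩, Or.inr ⟨h, rfl⟩⟩)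
      · exact h2 (Or.inr ⟨rfl, h⟩)
  · rintro (⟨hga, rfl⟩ | ⟨rfl, hhb, hcl⟩)
    · refine ⟨Or.inl ⟨hga, rfl⟩, ?_⟩
      rintro (⟨-, (⟨-, h⟩ | ⟨-, h⟩)⟩ | ⟨-, h⟩)
      · exact hne h.symm
      · exact hga.ne h
      · exact hne h
    · refine ⟨Or.inr ⟨hhb, rfl⟩, ?_⟩
      rintro (⟨-, (⟨h, -⟩ | ⟨h, -⟩)⟩ | ⟨-, h⟩)
      · exact G.irrefl h
      · exact hcl (Or.inl ⟨hhb, h⟩)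
      · exact hcl (Or.inr h)

section Dist
variable {G : SimpleGraph α} {H : SimpleGraph β} {x : α} {y1 y2 : β}

lemma ne_LR (hy : H.Adj y1 y2) {z w : α × β}
    (hz : z ∈ Rside (G.boxProd H) (x, y1) (x, y2))
    (hw : w ∈ Rside (G.boxProd H) (x, y2) (x, y1)) : z ≠ w := by
  rw [mem_RsideBox_iff G H hy] at hz
  rw [mem_RsideBox_iff G H hy.symm] at hw
  intro h
  subst h
  rcases hz with ⟨-, hz2⟩ | ⟨-, hz2⟩ <;> rcases hw with ⟨-, hw2⟩ | ⟨-, hw2⟩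
  · exact hy.ne (hz2.symm.trans hw2)
  · exact ((mem_Rside_iff H y2 y1 _).1 hw2).2.2 hz2
  · exact ((mem_Rside_iff H y1 y2 _).1 hz2).2.2 hw2
  · exact ((mem_Rside_iff H y1 y2 _).1 hz2).2.1 ((mem_Rside_iff H y2 y1 _).1 hw2).1

lemma reach_LR (hy : H.Adj y1 y2) {z w : α × β}
    (hz : z ∈ Rside (G.boxProd H) (x, y1) (x, y2))
    (hw : w ∈ Rside (G.boxProd H) (x, y2) (x, y1)) :
    (G.boxProd H).Reachable z w ∧ (G.boxProd H).dist z w ≤ 3 := by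
  have h1 : (G.boxProd H).Adj z (x, y1) := hz.1.symm
  have h2 : (G.boxProd H).Adj (x, y1) (x, y2) := SimpleGraph.boxProd_adj.mpr (Or.inr ⟨hy, rfl⟩)
  have h3 : (G.boxProd H).Adj (x, y2) w := hw.1
  let p : (G.boxProd H).Walk z w := Walk.cons h1 (Walk.cons h2 (Walk.cons h3 Walk.nil))
  refine ⟨⟨p⟩, ?_⟩
  have := SimpleGraph.dist_le p
  simpa [p] using this

lemma dist_ge_one (hy : H.Adj y1 y2) {z w : α × β}
    (hz : z ∈ Rside (G.boxProd H) (x, y1) (x, y2))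
    (hw : w ∈ Rside (G.boxProd H) (x, y2) (x, y1)) :
    1 ≤ (G.boxProd H).dist z w :=
  ((reach_LR hy hz hw).1.pos_dist_of_ne (ne_LR hy hz hw))

lemma key_ineq (hy : H.Adj y1 y2) {z w : α × β} {x' : α} (hx' : G.Adj x x')
    (hz : z ∈ Rside (G.boxProd H) (x, y1) (x, y2))
    (hw : w ∈ Rside (G.boxProd H) (x, y2) (x, y1)) :
    (G.boxProd H).dist z w + 1 ≤
      (G.boxProd H).dist z (x', y2) + (G.boxProd H).dist (x', y1) w := by
  have hz0 : ((x', y1) : α × β) ∈ Rside (G.boxProd H) (x, y1) (x, y2) :=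
    (mem_RsideBox_iff G H hy x _).2 (Or.inl ⟨hx', rfl⟩)
  have hw0 : ((x', y2) : α × β) ∈ Rside (G.boxProd H) (x, y2) (x, y1) :=
    (mem_RsideBox_iff G H hy.symm x _).2 (Or.inl ⟨hx', rfl⟩)
  by_cases hzz : z = (x', y1)
  · subst hzz
    have := dist_ge_one hy hz hw0
    omega
  by_cases hww : w = (x', y2)
  · subst hww
    have := dist_ge_one hy hz0 hw
    omega
  -- both distances on the right are ≥ 2
  have hnadj1 : ¬ (G.boxProd H).Adj z (x', y2) := by
    rw [mem_RsideBox_iff G H hy] at hz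
    rintro (⟨h1, h2⟩ | ⟨h1, h2⟩)
    · rcases hz with ⟨-, hz2⟩ | ⟨-, hz2⟩
      · exact hy.ne (hz2.symm.trans h2)
      · exact (mem_Rside_iff H y1 y2 _).1 hz2 |>.2.2 h2
    · rcases hz with ⟨hz1, hz2⟩ | ⟨hz1, hz2⟩
      · exact hzz (Prod.ext h2 hz2)
      · exact (mem_Rside_iff H y1 y2 _).1 hz2 |>.2.1 h1.symm
  have hnadj2 : ¬ (G.boxProd H).Adj (x', y1) w := by
    rw [mem_RsideBox_iff G H hy.symm] at hw
    rintro (⟨h1, h2⟩ | ⟨h1, h2⟩)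
    · rcases hw with ⟨-, hw2⟩ | ⟨-, hw2⟩
      · exact hy.ne (h2.trans hw2)
      · exact (mem_Rside_iff H y2 y1 _).1 hw2 |>.2.2 h2.symm
    · rcases hw with ⟨hw1, hw2⟩ | ⟨hw1, hw2⟩
      · exact hww (Prod.ext h2.symm hw2)
      · exact (mem_Rside_iff H y2 y1 _).1 hw2 |>.2.1 h1
  have hd1 : 2 ≤ (G.boxProd H).dist z (x', y2) := by
    have hpos := dist_ge_one hy hz hw0
    have hne1 : (G.boxProd H).dist z (x', y2) ≠ 1 := fun h =>
      hnadj1 (SimpleGraph.dist_eq_one_iff_adj.1 h)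
    omega
  have hd2 : 2 ≤ (G.boxProd H).dist (x', y1) w := by
    have hpos := dist_ge_one hy hz0 hw
    have hne1 : (G.boxProd H).dist (x', y1) w ≠ 1 := fun h =>
      hnadj2 (SimpleGraph.dist_eq_one_iff_adj.1 h)
    omega
  have hd3 := (reach_LR hy hz hw).2
  omega

end Dist

section Card
variable [Fintype α] [Fintype β] {G : SimpleGraph α} {H : SimpleGraph β} {x : α} {y1 y2 : β}
  {dG dH : ℕ}

lemma ncard_Rside_H (hH : H.IsRegularOfDegree dH) (hy : H.Adj y1 y2) :
    (Rside H y1 y2).ncard = dH - (((H.neighborSet y1) ∩ (H.neighborSet y2)).ncard + 1) := by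
  have hsub : (H.neighborSet y1 ∩ H.neighborSet y2) ∪ {y2} ⊆ H.neighborSet y1 := by
    apply Set.union_subset Set.inter_subset_left
    simpa using hy
  have hy2 : y2 ∉ H.neighborSet y1 ∩ H.neighborSet y2 := fun h => H.irrefl h.2
  rw [Rside, Set.ncard_diff hsub,
    Set.ncard_union_eq (Set.disjoint_singleton_right.2 hy2), Set.ncard_singleton]
  congr 1
  rw [← Nat.card_coe_set_eq, Nat.card_eq_fintype_card,
    SimpleGraph.card_neighborSet_eq_degree, hH y1]

lemma ncard_Rside_H_symm (hH : H.IsRegularOfDegree dH) (hy : H.Adj y1 y2) :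
    (Rside H y1 y2).ncard = (Rside H y2 y1).ncard := by
  rw [ncard_Rside_H hH hy, ncard_Rside_H hH hy.symm, Set.inter_comm]

lemma ncard_L (hG : G.IsRegularOfDegree dG) (hy : H.Adj y1 y2) :
    (Rside (G.boxProd H) (x, y1) (x, y2)).ncard = dG + (Rside H y1 y2).ncard := by
  have hset : Rside (G.boxProd H) (x, y1) (x, y2) =
      ((fun a => (a, y1)) '' G.neighborSet x) ∪ ((fun b => (x, b)) '' Rside H y1 y2) := by
    ext ⟨a, b⟩
    rw [mem_RsideBox_iff G H hy]
    simp only [Set.mem_union, Set.mem_image, SimpleGraph.mem_neighborSet, Prod.mk.injEq]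
    constructor
    · rintro (⟨h1, rfl⟩ | ⟨rfl, h2⟩)
      · exact Or.inl ⟨a, h1, rfl, rfl⟩
      · exact Or.inr ⟨b, h2, rfl, rfl⟩
    · rintro (⟨a', h1, rfl, rfl⟩ | ⟨b', h2, rfl, rfl⟩)
      · exact Or.inl ⟨h1, rfl⟩
      · exact Or.inr ⟨rfl, h2⟩
  have hdisj : Disjoint ((fun a => (a, y1)) '' G.neighborSet x)
      ((fun b => (x, b)) '' Rside H y1 y2) := by
    rw [Set.disjoint_left]
    rintro p ⟨a, ha, rfl⟩ ⟨b, hb, hh⟩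
    have hb1 : b = y1 := by simpa using congrArg Prod.snd hh
    rw [hb1] at hb
    exact H.irrefl ((mem_Rside_iff H y1 y2 y1).1 hb).1
  have hinj1 : Function.Injective (fun a : α => (a, y1)) := fun a b h => congrArg Prod.fst h
  have hinj2 : Function.Injective (fun b : β => (x, b)) := fun a b h => congrArg Prod.snd h
  rw [hset, Set.ncard_union_eq hdisj, Set.ncard_image_of_injective _ hinj1,
    Set.ncard_image_of_injective _ hinj2]
  congr 1
  rw [← Nat.card_coe_set_eq, Nat.card_eq_fintype_card,
    SimpleGraph.card_neighborSet_eq_degree, hG x]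

lemma card_L_eq_card_R (hG : G.IsRegularOfDegree dG) (hH : H.IsRegularOfDegree dH)
    (hy : H.Adj y1 y2) :
    Fintype.card (Rside (G.boxProd H) (x, y1) (x, y2)) =
      Fintype.card (Rside (G.boxProd H) (x, y2) (x, y1)) := by
  rw [← Nat.card_eq_fintype_card, ← Nat.card_eq_fintype_card,
    Nat.card_coe_set_eq, Nat.card_coe_set_eq, ncard_L hG hy, ncard_L hG hy.symm,
    ncard_Rside_H_symm hH hy]

end Card

theorem exists_optimal_assignment_fixing_G_fiber [Fintype α] [Fintype β]
    (G : SimpleGraph α) (H : SimpleGraph β) (dG dH : ℕ)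
    (hG : G.IsRegularOfDegree dG) (hH : H.IsRegularOfDegree dH)
    (x : α) (y1 y2 : β) (hy : H.Adj y1 y2) :
    ∃ φ : Rside (G.boxProd H) (x, y1) (x, y2) ≃ Rside (G.boxProd H) (x, y2) (x, y1),
      IsOptimal (G.boxProd H) (x, y1) (x, y2) φ ∧
      ∀ (x' : α) (h : ((x', y1) : α × β) ∈ Rside (G.boxProd H) (x, y1) (x, y2)),
        G.Adj x x' → ((φ ⟨(x', y1), h⟩ : α × β)) = (x', y2) := by
  classical
  set P : SimpleGraph (α × β) := G.boxProd H with hPdef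
  have hcostsum : ∀ φ : Rside P (x, y1) (x, y2) ≃ Rside P (x, y2) (x, y1),
      cost P (x, y1) (x, y2) φ =
        ∑ z : Rside P (x, y1) (x, y2), (P.dist z.1 (φ z).1 : ℝ) :=
    fun φ => tsum_fintype _
  -- the set of costs is finite and nonempty
  have hScost : { c | ∃ φ : Rside P (x, y1) (x, y2) ≃ Rside P (x, y2) (x, y1),
      c = cost P (x, y1) (x, y2) φ } = Set.range (cost P (x, y1) (x, y2)) := by
    ext c; simp [Set.mem_range, eq_comm]
  have hSfin : { c | ∃ φ : Rside P (x, y1) (x, y2) ≃ Rside P (x, y2) (x, y1),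
      c = cost P (x, y1) (x, y2) φ }.Finite := by
    rw [hScost]; exact Set.finite_range _
  have φ0 : Rside P (x, y1) (x, y2) ≃ Rside P (x, y2) (x, y1) :=
    Fintype.equivOfCardEq (card_L_eq_card_R hG hH hy)
  have hSne : { c | ∃ φ : Rside P (x, y1) (x, y2) ≃ Rside P (x, y2) (x, y1),
      c = cost P (x, y1) (x, y2) φ }.Nonempty := ⟨_, φ0, rfl⟩
  have hopt_mem := hSne.csInf_mem hSfin
  obtain ⟨φ1, hφ1⟩ := hopt_mem
  have hOptLB : ∀ φ : Rside P (x, y1) (x, y2) ≃ Rside P (x, y2) (x, y1),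
      OPTc P (x, y1) (x, y2) ≤ cost P (x, y1) (x, y2) φ :=
    fun φ => csInf_le hSfin.bddBelow ⟨φ, rfl⟩
  -- the finset of optimal assignments
  set Φ : Finset (Rside P (x, y1) (x, y2) ≃ Rside P (x, y2) (x, y1)) :=
    Finset.univ.filter (fun φ => IsOptimal P (x, y1) (x, y2) φ) with hΦdef
  have hΦne : Φ.Nonempty := ⟨φ1, by
    simp only [hΦdef, Finset.mem_filter, Finset.mem_univ, true_and]
    exact hφ1.symm⟩
  set fcount : (Rside P (x, y1) (x, y2) ≃ Rside P (x, y2) (x, y1)) → ℕ :=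
    fun φ => (Finset.univ.filter (fun z : Rside P (x, y1) (x, y2) =>
      (z : α × β).2 = y1 ∧ ((φ z : α × β)) = ((z : α × β).1, y2))).card with hfdef
  obtain ⟨ψ, hψΦ, hmax⟩ := Φ.exists_max_image fcount hΦne
  have hψopt : IsOptimal P (x, y1) (x, y2) ψ := (Finset.mem_filter.1 hψΦ).2
  refine ⟨ψ, hψopt, ?_⟩
  intro x' hmem hadj
  by_contra hne'
  set z0 : Rside P (x, y1) (x, y2) := ⟨(x', y1), hmem⟩ with hz0def
  have hw0mem : ((x', y2) : α × β) ∈ Rside P (x, y2) (x, y1) :=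
    (mem_RsideBox_iff G H hy.symm x _).2 (Or.inl ⟨hadj, rfl⟩)
  set w0 : Rside P (x, y2) (x, y1) := ⟨(x', y2), hw0mem⟩ with hw0def
  have hzw : ψ z0 ≠ w0 := fun h => hne' (congrArg Subtype.val h)
  set z1 : Rside P (x, y1) (x, y2) := ψ.symm w0 with hz1def
  have hz1 : ψ z1 = w0 := ψ.apply_symm_apply w0
  have hz01 : z1 ≠ z0 := fun h => hzw (by rw [← h, hz1])
  set ψ' := ψ.trans (Equiv.swap (ψ z0) w0) with hψ'def
  have hψ'z0 : ψ' z0 = w0 := by simp [hψ'def, Equiv.swap_apply_left]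
  have hψ'z1 : ψ' z1 = ψ z0 := by simp [hψ'def, hz1, Equiv.swap_apply_right]
  have hψ'other : ∀ z, z ≠ z0 → z ≠ z1 → ψ' z = ψ z := by
    intro z h0 h1
    have e1 : ψ z ≠ ψ z0 := fun h => h0 (ψ.injective h)
    have e2 : ψ z ≠ w0 := fun h => h1 (by rw [hz1def, ← h, ψ.symm_apply_apply])
    simp [hψ'def, Equiv.swap_apply_of_ne_of_ne e1 e2]
  -- cost comparison
  have hcost' : cost P (x, y1) (x, y2) ψ' ≤ cost P (x, y1) (x, y2) ψ := by
    rw [hcostsum ψ', hcostsum ψ]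
    have hsub : ({z0, z1} : Finset (Rside P (x, y1) (x, y2))) ⊆ Finset.univ :=
      Finset.subset_univ _
    rw [← Finset.sum_sdiff hsub, ← Finset.sum_sdiff hsub]
    have h1 : ∑ z ∈ Finset.univ \ {z0, z1}, (P.dist (z : α × β) ((ψ' z : α × β)) : ℝ) =
        ∑ z ∈ Finset.univ \ {z0, z1}, (P.dist (z : α × β) ((ψ z : α × β)) : ℝ) := by
      refine Finset.sum_congr rfl fun z hz => ?_
      simp only [Finset.mem_sdiff, Finset.mem_insert, Finset.mem_singleton, not_or] at hz
      rw [hψ'other z hz.2.1 hz.2.2]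
    have h2 : ∑ z ∈ ({z0, z1} : Finset (Rside P (x, y1) (x, y2))),
        (P.dist (z : α × β) ((ψ' z : α × β)) : ℝ) ≤
        ∑ z ∈ ({z0, z1} : Finset (Rside P (x, y1) (x, y2))),
        (P.dist (z : α × β) ((ψ z : α × β)) : ℝ) := by
      rw [Finset.sum_pair (Ne.symm hz01), Finset.sum_pair (Ne.symm hz01)]
      rw [hψ'z0, hψ'z1, hz1]
      have hd01 : P.dist (z0 : α × β) (w0 : α × β) = 1 :=
        SimpleGraph.dist_eq_one_iff_adj.2 (SimpleGraph.boxProd_adj.mpr (Or.inr ⟨hy, rfl⟩))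
      have hkey : P.dist (z1 : α × β) ((ψ z0 : α × β)) + 1 ≤
          P.dist (z1 : α × β) (x', y2) + P.dist (x', y1) ((ψ z0 : α × β)) :=
        key_ineq hy hadj z1.2 (ψ z0).2
      have hkey' : (P.dist (z1 : α × β) ((ψ z0 : α × β)) : ℝ) + 1 ≤
          (P.dist (z1 : α × β) (x', y2) : ℝ) + (P.dist (x', y1) ((ψ z0 : α × β)) : ℝ) := by
        exact_mod_cast hkey
      rw [hd01]
      have e0 : ((z0 : α × β)) = ((x', y1) : α × β) := rfl
      have ew : ((w0 : α × β)) = ((x', y2) : α × β) := rfl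
      rw [e0, ew]
      push_cast
      linarith
    linarith [h1, h2]
  have hψ'opt : IsOptimal P (x, y1) (x, y2) ψ' :=
    le_antisymm (hcost'.trans_eq hψopt) (hOptLB ψ')
  have hψ'Φ : ψ' ∈ Φ := by
    simp only [hΦdef, Finset.mem_filter, Finset.mem_univ, true_and]
    exact hψ'opt
  -- fixed-point count strictly increases
  have hsubset : Finset.univ.filter (fun z : Rside P (x, y1) (x, y2) =>
      (z : α × β).2 = y1 ∧ ((ψ z : α × β)) = ((z : α × β).1, y2)) ⊆
      Finset.univ.filter (fun z : Rside P (x, y1) (x, y2) =>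
      (z : α × β).2 = y1 ∧ ((ψ' z : α × β)) = ((z : α × β).1, y2)) := by
    intro z hz
    rw [Finset.mem_filter] at hz ⊢
    obtain ⟨-, hz2, hzfix⟩ := hz
    have hzne0 : z ≠ z0 := by
      rintro rfl
      exact hne' hzfix
    have hzne1 : z ≠ z1 := by
      intro h
      have h5 : ((w0 : α × β)) = ((z : α × β).1, y2) := by rw [← hz1, ← h]; exact hzfix
      have hfst : (z : α × β).1 = x' := (congrArg Prod.fst h5).symm
      exact hz01 (h.symm.trans (Subtype.ext (Prod.ext hfst hz2)))
    exact ⟨Finset.mem_univ _, hz2, by rw [hψ'other z hzne0 hzne1]; exact hzfix⟩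
  have hssub : Finset.univ.filter (fun z : Rside P (x, y1) (x, y2) =>
      (z : α × β).2 = y1 ∧ ((ψ z : α × β)) = ((z : α × β).1, y2)) ⊂
      Finset.univ.filter (fun z : Rside P (x, y1) (x, y2) =>
      (z : α × β).2 = y1 ∧ ((ψ' z : α × β)) = ((z : α × β).1, y2)) := by
    rw [Finset.ssubset_iff_of_subset hsubset]
    refine ⟨z0, ?_, ?_⟩
    · rw [Finset.mem_filter]
      exact ⟨Finset.mem_univ _, rfl, by rw [hψ'z0]⟩
    · rw [Finset.mem_filter]
      rintro ⟨-, -, hfix⟩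
      exact hne' hfix
  have hlt : fcount ψ < fcount ψ' := Finset.card_lt_card hssub
  exact absurd (hmax ψ' hψ'Φ) (not_le.2 hlt)
end
end
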